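/- arXiv:2403.12657 — 7 statements merged into one kernel-verified Lean document; each statement's English description precedes it below -/
import Mathlib

section
/- Let (X, μ) be a probability space, T : X → X an invertible measure-preserving transformation, f ∈ L²(X, μ), and let σ_f be a finite positive Borel measure on the circle ℝ/ℤ ≅ [0,1) satisfying ∫ e^{2πikω} dσ_f(ω) = ∫ f(T^k x)·conj(f(x)) dμ(x) for all k ∈ ℤ. Then for every ω ∈ [0,1) and every r ∈ (0, 1/2], with N = ⌊1/(2r)⌋, one has σ_f(B(ω, r)) ≤ (π²/(4N))·G_N(f, ω), where G_N(f, ω) = N^{−1} ∫_X |Σ_{n=0}^{N−1} e^{−2πinω} f(T^n x)|² dμ(x) and B(ω, r) is the arc of radius r centered at ω in ℝ/ℤ. -/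
open MeasureTheory Filter Set Real

noncomputable section

/-- Distance on the circle `ℝ/ℤ` between (representatives of) two points. -/
def circDist (s t : ℝ) : ℝ := |s - t - round (s - t)|

/-- The closed ball (arc) of radius `r` around `ω` in the circle `ℝ/ℤ`, as a subset of `ℝ`. -/
def circBall (ω r : ℝ) : Set ℝ := {t | circDist t ω ≤ r}

/-- The `k`-th power (`k ∈ ℤ`) of an invertible transformation `T` with inverse `S`. -/
def zpowIter {X : Type*} (T S : X → X) (k : ℤ) : X → X :=
  if 0 ≤ k then T^[k.toNat] else S^[(-k).toNat]


/-!
The spectral hypothesis makes `n ↦ f ∘ Tⁿ` and `n ↦ e^{2πin·}` have the same Gram matrix in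
`L²(μ)` and `L²(σ)`, so the averaged squared twisted Birkhoff sum equals `∫ |D_N(t - ω)|² dσ(t)`
for the Dirichlet kernel `D_N(θ) = Σ_{n<N} e^{2πinθ}`. Since `|D_N(θ)| = |sin(πNθ) / sin(πθ)|`,
Jordan's inequality gives `|D_N| ≥ 2N/π` on the arc `B(ω, r)` with `r ≤ 1/(2N)`, and Markov's
inequality concludes.
-/

open ComplexConjugate

theorem MeasureTheory.MeasurePreserving.integral_comp_of_aestronglyMeasurable
    {α β E : Type*} [MeasurableSpace α] [MeasurableSpace β] [NormedAddCommGroup E]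
    [NormedSpace ℝ E] {μ : Measure α} {ν : Measure β} {φ : α → β} (hφ : MeasurePreserving φ μ ν)
    {g : β → E} (hg : AEStronglyMeasurable g ν) :
    ∫ x, g (φ x) ∂μ = ∫ y, g y ∂ν := by
  rw [← hφ.map_eq] at hg ⊢
  exact (integral_map hφ.aemeasurable hg).symm

theorem ofReal_integral_sq_norm_sum {ι α : Type*} [MeasurableSpace α] {ν : Measure α}
    (s : Finset ι) (c : ι → ℂ) {g : ι → α → ℂ} (hg : ∀ i, MemLp (g i) 2 ν) :
    ((∫ x, ‖∑ i ∈ s, c i * g i x‖ ^ 2 ∂ν : ℝ) : ℂ) =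
      ∑ i ∈ s, ∑ j ∈ s, c i * conj (c j) * ∫ x, g i x * conj (g j x) ∂ν := by
  have hint : ∀ i j, Integrable (fun x => g i x * conj (g j x)) ν := fun i j =>
    (hg i).integrable_mul (hg j).star
  have hexpand : ∀ x, ((‖∑ i ∈ s, c i * g i x‖ ^ 2 : ℝ) : ℂ) =
      ∑ i ∈ s, ∑ j ∈ s, c i * conj (c j) * (g i x * conj (g j x)) := fun x => by
    rw [Complex.ofReal_pow, ← Complex.mul_conj', map_sum, Finset.sum_mul_sum]
    simp only [map_mul]
    exact Finset.sum_congr rfl fun i _ => Finset.sum_congr rfl fun j _ => by ring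
  simp_rw [← integral_complex_ofReal, hexpand]
  rw [integral_finsetSum _ fun i _ => integrable_finsetSum _ fun j _ => (hint i j).const_mul _]
  refine Finset.sum_congr rfl fun i _ => ?_
  rw [integral_finsetSum _ fun j _ => (hint i j).const_mul _]
  simp_rw [integral_const_mul]

theorem memLp_exp_two_pi_I_mul (σ : Measure ℝ) [IsFiniteMeasure σ] (p : ENNReal) (n : ℕ) :
    MemLp (fun t : ℝ => Complex.exp (2 * π * Complex.I * n * t)) p σ := by
  refine MemLp.of_bound (by fun_prop) 1 (ae_of_all _ fun t => le_of_eq ?_)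
  rw [← Complex.norm_exp_ofReal_mul_I (2 * π * n * t)]
  push_cast
  ring_nf

theorem exp_two_pi_I_mul_mul_conj {n m : ℕ} (h : m ≤ n) (t : ℝ) :
    Complex.exp (2 * π * Complex.I * n * t) * conj (Complex.exp (2 * π * Complex.I * m * t)) =
      Complex.exp (2 * π * Complex.I * (n - m : ℕ) * t) := by
  rw [← Complex.exp_conj, ← Complex.exp_add, Nat.cast_sub h]
  simp only [map_mul, map_ofNat, Complex.conj_ofReal, Complex.conj_I, map_natCast]
  ring_nf

theorem integral_mul_conj_eq_conj_integral {α : Type*} [MeasurableSpace α] (ρ : Measure α)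
    (u v : α → ℂ) : ∫ y, u y * conj (v y) ∂ρ = conj (∫ y, v y * conj (u y) ∂ρ) := by
  rw [← integral_conj]
  simp only [map_mul, Complex.conj_conj, mul_comm]

section Correlation

variable {X : Type*} [MeasurableSpace X] {μ : Measure X} {T : X → X} {f : X → ℂ}
  {σ : Measure ℝ}

theorem integral_iterate_mul_conj_iterate (hT : MeasurePreserving T μ μ) (hf : MemLp f 2 μ)
    (hfourier : ∀ k : ℕ, ∫ t, Complex.exp (2 * π * Complex.I * k * t) ∂σ =
      ∫ x, f (T^[k] x) * conj (f x) ∂μ) (n m : ℕ) :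
    ∫ x, f (T^[n] x) * conj (f (T^[m] x)) ∂μ =
      ∫ t, Complex.exp (2 * π * Complex.I * n * t) *
        conj (Complex.exp (2 * π * Complex.I * m * t)) ∂σ := by
  wlog h : m ≤ n generalizing n m
  · rw [integral_mul_conj_eq_conj_integral, this m n (by omega),
      ← integral_mul_conj_eq_conj_integral]
  have hsplit : ∀ x, T^[n] x = T^[n - m] (T^[m] x) := fun x => by
    rw [← Function.iterate_add_apply, Nat.sub_add_cancel h]
  simp_rw [hsplit, exp_two_pi_I_mul_mul_conj h]
  rw [hfourier, (hT.iterate m).integral_comp_of_aestronglyMeasurable (g := fun y =>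
    f (T^[n - m] y) * conj (f y))]
  exact ((hf.comp_measurePreserving (hT.iterate _)).integrable_mul hf.star).aestronglyMeasurable

theorem integral_sq_norm_sum_iterate (hT : MeasurePreserving T μ μ) (hf : MemLp f 2 μ)
    [IsFiniteMeasure σ]
    (hfourier : ∀ k : ℕ, ∫ t, Complex.exp (2 * π * Complex.I * k * t) ∂σ =
      ∫ x, f (T^[k] x) * conj (f x) ∂μ) (c : ℕ → ℂ) (N : ℕ) :
    ∫ x, ‖∑ n ∈ Finset.range N, c n * f (T^[n] x)‖ ^ 2 ∂μ =
      ∫ t, ‖∑ n ∈ Finset.range N, c n * Complex.exp (2 * π * Complex.I * n * t)‖ ^ 2 ∂σ := by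
  apply Complex.ofReal_injective
  rw [ofReal_integral_sq_norm_sum (g := fun n x => f (T^[n] x)) _ _
      fun n => hf.comp_measurePreserving (hT.iterate n),
    ofReal_integral_sq_norm_sum _ _ (memLp_exp_two_pi_I_mul σ 2)]
  simp only [integral_iterate_mul_conj_iterate hT hf hfourier]

end Correlation

theorem norm_sum_exp_mul_I_mul_abs_sin (N : ℕ) (θ : ℝ) :
    ‖∑ n ∈ Finset.range N, Complex.exp (n * θ * Complex.I)‖ * |sin (θ / 2)| =
      |sin (N * θ / 2)| := by
  set q := Complex.exp (Complex.I * θ)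
  have hpow : ∀ n : ℕ, Complex.exp (n * θ * Complex.I) = q ^ n := fun n => by
    rw [← Complex.exp_nat_mul]; ring_nf
  have hnorm := congrArg norm (geom_sum_mul q N)
  rw [← Complex.exp_nat_mul, norm_mul, Complex.norm_exp_I_mul_ofReal_sub_one,
    show (N : ℂ) * (Complex.I * θ) = Complex.I * ((N * θ : ℝ) : ℂ) by push_cast; ring,
    Complex.norm_exp_I_mul_ofReal_sub_one] at hnorm
  simp only [norm_mul, Real.norm_eq_abs, abs_two] at hnorm
  simp only [hpow]
  linarith

theorem two_mul_div_pi_le_norm_sum_exp_mul_I {N : ℕ} {θ : ℝ} (hθ : |θ| ≤ π / N) :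
    2 * N / π ≤ ‖∑ n ∈ Finset.range N, Complex.exp (n * θ * Complex.I)‖ := by
  rcases eq_or_ne θ 0 with rfl | hθ0
  · simp only [Complex.ofReal_zero, mul_zero, zero_mul, Complex.exp_zero, Finset.sum_const,
      Finset.card_range, nsmul_eq_mul, mul_one, Complex.norm_natCast]
    rw [div_le_iff₀ pi_pos]
    nlinarith [pi_gt_three, (N.cast_nonneg : (0 : ℝ) ≤ N)]
  have hN : (1 : ℝ) ≤ N := by
    rcases N.eq_zero_or_pos with rfl | hN
    · simp_all
    · exact_mod_cast hN
  have hhalf : |θ / 2| ≤ π / 2 := by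
    rw [abs_div, abs_two]
    have : π / N ≤ π := div_le_self pi_pos.le hN
    linarith
  have hsin : 0 < |sin (θ / 2)| :=
    (mul_pos (div_pos two_pos pi_pos) (by positivity)).trans_le (mul_abs_le_abs_sin hhalf)
  have hjordan : 2 / π * |N * θ / 2| ≤ |sin (N * θ / 2)| := by
    apply mul_abs_le_abs_sin
    rw [mul_div_assoc, abs_mul, Nat.abs_cast, abs_div, abs_two, mul_div_assoc']
    rw [div_le_div_iff_of_pos_right two_pos]
    rwa [le_div_iff₀' (by linarith)] at hθ
  rw [← mul_le_mul_iff_left₀ hsin, norm_sum_exp_mul_I_mul_abs_sin]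
  calc 2 * N / π * |sin (θ / 2)| ≤ 2 * N / π * |θ / 2| :=
        mul_le_mul_of_nonneg_left abs_sin_le_abs (by positivity)
    _ = 2 / π * |N * θ / 2| := by
        rw [mul_div_assoc (N : ℝ), abs_mul, Nat.abs_cast]; ring
    _ ≤ _ := hjordan

theorem zpowIter_natCast {X : Type*} (T S : X → X) (k : ℕ) : zpowIter T S k = T^[k] := by
  simp [zpowIter]

theorem two_mul_div_pi_le_norm_twisted_sum {N : ℕ} {ω r t : ℝ} (hrN : r ≤ 1 / (2 * N))
    (ht : t ∈ circBall ω r) :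
    2 * N / π ≤ ‖∑ n ∈ Finset.range N, Complex.exp (-(2 * π * Complex.I * n * ω)) *
      Complex.exp (2 * π * Complex.I * n * t)‖ := by
  -- `|s| = circDist t ω`, and shifting by the integer `round (t - ω)` leaves each term unchanged.
  set s := t - ω - round (t - ω)
  have hterm : ∀ n : ℕ, Complex.exp (-(2 * π * Complex.I * n * ω)) *
      Complex.exp (2 * π * Complex.I * n * t) =
        Complex.exp (n * ((2 * π * s : ℝ) : ℂ) * Complex.I) := fun n => by
    rw [← Complex.exp_add, show -(2 * π * Complex.I * n * ω) + 2 * π * Complex.I * n * t =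
      n * ((2 * π * s : ℝ) : ℂ) * Complex.I + ((n * round (t - ω) : ℤ) : ℂ) * (2 * π * Complex.I)
      by simp only [s]; push_cast; ring, Complex.exp_add, Complex.exp_int_mul_two_pi_mul_I, mul_one]
  simp_rw [hterm]
  apply two_mul_div_pi_le_norm_sum_exp_mul_I
  rw [abs_mul, abs_of_pos two_pi_pos]
  calc 2 * π * |s| ≤ 2 * π * r := by gcongr; exact ht
    _ ≤ 2 * π * (1 / (2 * N)) := by gcongr
    _ = π / N := by ring

theorem spectral_measure_ball_le_birkhoff_general
    {X : Type*} [MeasurableSpace X] (μ : Measure X)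
    (T S : X → X)
    (hT : MeasurePreserving T μ μ)
    (f : X → ℂ) (hf : MemLp f 2 μ)
    (σ : Measure ℝ) [IsFiniteMeasure σ]
    (hfourier : ∀ k : ℤ,
      (∫ t, Complex.exp (2 * π * Complex.I * k * t) ∂σ)
        = ∫ x, f (zpowIter T S k x) * (starRingEnd ℂ) (f x) ∂μ)
    (ω : ℝ) (r : ℝ) (hr : r ∈ Set.Ioc (0:ℝ) (1/2)) :
    (σ (circBall ω r)).toReal ≤
      (π ^ 2 / (4 * (⌊1/(2*r)⌋₊ : ℝ))) *
        ((1 / (⌊1/(2*r)⌋₊ : ℝ)) *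
          ∫ x, ‖∑ n ∈ Finset.range ⌊1/(2*r)⌋₊,
              Complex.exp (-(2 * π * Complex.I * n * ω)) * f (T^[n] x)‖ ^ 2 ∂μ) := by
  obtain ⟨hr0, hr2⟩ := hr
  set N := ⌊1 / (2 * r)⌋₊
  have hN : (1 : ℝ) ≤ N := by
    exact_mod_cast Nat.le_floor (by rw [Nat.cast_one, le_div_iff₀ (by positivity)]; linarith)
  have hrN : r ≤ 1 / (2 * N) := by
    have hfloor : (N : ℝ) ≤ 1 / (2 * r) := Nat.floor_le (by positivity)
    rw [le_div_iff₀ (by positivity)] at hfloor ⊢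
    linarith
  set D : ℝ → ℝ := fun t => ‖∑ n ∈ Finset.range N, Complex.exp (-(2 * π * Complex.I * n * ω)) *
    Complex.exp (2 * π * Complex.I * n * t)‖ ^ 2
  have hspectral : ∫ x, ‖∑ n ∈ Finset.range N,
      Complex.exp (-(2 * π * Complex.I * n * ω)) * f (T^[n] x)‖ ^ 2 ∂μ = ∫ t, D t ∂σ :=
    integral_sq_norm_sum_iterate hT hf
      (fun k => by simpa only [Int.cast_natCast, zpowIter_natCast] using hfourier k) _ N
  have hD : Integrable D σ :=
    (memLp_finsetSum _ fun n _ => (memLp_exp_two_pi_I_mul σ 2 n).const_mul _).integrable_norm_pow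
      two_ne_zero
  have hball : circBall ω r ⊆ {t | (2 * N / π) ^ 2 ≤ D t} := fun t ht =>
    pow_le_pow_left₀ (by positivity) (two_mul_div_pi_le_norm_twisted_sum hrN ht) 2
  have hmarkov := mul_meas_ge_le_integral_of_nonneg (ae_of_all _ fun t => by positivity) hD
    ((2 * N / π) ^ 2)
  rw [hspectral, ← measureReal_def]
  calc σ.real (circBall ω r) ≤ σ.real {t | (2 * N / π) ^ 2 ≤ D t} := measureReal_mono hball
    _ ≤ (∫ t, D t ∂σ) / (2 * N / π) ^ 2 := by rw [le_div_iff₀' (by positivity)]; exact hmarkov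
    _ = _ := by field_simp; ring

/-- **Lemma.** A local estimate for the spectral measure of an observable `f` of an invertible
measure-preserving system in terms of the averaged squared twisted Birkhoff sums:
`σ_f(B(ω,r)) ≤ (π²/(4N)) G_N(f,ω)` with `N = ⌊1/(2r)⌋`. -/
theorem spectral_measure_ball_le_birkhoff
    {X : Type*} [MeasurableSpace X] (μ : Measure X) [IsProbabilityMeasure μ]
    (T S : X → X)
    (hTS : Function.LeftInverse S T) (hST : Function.RightInverse S T)
    (hT : MeasurePreserving T μ μ) (hS : MeasurePreserving S μ μ)
    (f : X → ℂ) (hf : MemLp f 2 μ)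
    (σ : Measure ℝ) [IsFiniteMeasure σ]
    (hsupp : σ (Set.Ico (0:ℝ) 1)ᶜ = 0)
    (hfourier : ∀ k : ℤ,
      (∫ t, Complex.exp (2 * π * Complex.I * k * t) ∂σ)
        = ∫ x, f (zpowIter T S k x) * (starRingEnd ℂ) (f x) ∂μ)
    (ω : ℝ) (hω : ω ∈ Set.Ico (0:ℝ) 1) (r : ℝ) (hr : r ∈ Set.Ioc (0:ℝ) (1/2)) :
    (σ (circBall ω r)).toReal ≤
      (π ^ 2 / (4 * (⌊1/(2*r)⌋₊ : ℝ))) *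
        ((1 / (⌊1/(2*r)⌋₊ : ℝ)) *
          ∫ x, ‖∑ n ∈ Finset.range ⌊1/(2*r)⌋₊,
              Complex.exp (-(2 * π * Complex.I * n * ω)) * f (T^[n] x)‖ ^ 2 ∂μ) :=
  spectral_measure_ball_le_birkhoff_general μ T S hT f hf σ hfourier ω r hr

end
end

section
/- In the lattice approximation setup, let θ ∈ ℂ be nonzero and let e* ∈ ℂ^d satisfy Aᵀ e* = θ e*. Then for all n ≥ 0 and k ≥ 1: if z_{n+1} = z_{n+2} = ⋯ = z_{n+k} = 0, then |⟨ε_n, e*⟩| ≤ |θ|^{−k}·‖e*‖₁·b_L, where ⟨x, y⟩ = Σ_i x_i y_i is the bilinear pairing and ‖·‖₁ the ℓ¹-norm. -/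
/-!
Pairing with a left eigenvector `e*` of `A` (that is, `Aᵀ e* = θ e*`) turns `x ↦ A x` into
multiplication by `θ`. As long as `z` vanishes, `ε_{m+1} = A ε_m`, so `⟨ε_{n+k}, e*⟩ = θ^k ⟨ε_n, e*⟩`;
and every `ε_m` has sup-norm at most `b_L`, because `p_m` is a nearest lattice point to `Aᵐ(ω𝟙)`.
-/

open Matrix Polynomial Set

noncomputable section

/-- The error sequence `ε_n = Aⁿ(ω𝟙) − p_n`, where `p_n` is a chosen lattice point. -/
def epsSeq {d : ℕ} (A : Matrix (Fin d) (Fin d) ℤ) (ω : ℝ) (p : ℕ → Fin d → ℝ) (n : ℕ) :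
    Fin d → ℝ :=
  ((A.map (Int.cast : ℤ → ℝ)) ^ n) *ᵥ (fun _ => ω) - p n

/-- The lattice-valued sequence `z₀ = −p₀`, `z_n = A p_{n−1} − p_n` (`n ≥ 1`). -/
def zSeq {d : ℕ} (A : Matrix (Fin d) (Fin d) ℤ) (p : ℕ → Fin d → ℝ) : ℕ → Fin d → ℝ
  | 0 => -p 0
  | (n+1) => (A.map (Int.cast : ℤ → ℝ)) *ᵥ p n - p (n+1)

section Pairing

variable {ι R : Type*} [Fintype ι] [CommSemiring R]

theorem mulVec_dotProduct_of_transpose_mulVec_eq_smul {M : Matrix ι ι R} {e : ι → R} {θ : R}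
    (he : Mᵀ *ᵥ e = θ • e) (x : ι → R) : (M *ᵥ x) ⬝ᵥ e = θ * (x ⬝ᵥ e) := by
  rw [dotProduct_comm, dotProduct_mulVec, ← mulVec_transpose, he, smul_dotProduct, smul_eq_mul,
    dotProduct_comm]

theorem pow_mulVec_dotProduct_of_transpose_mulVec_eq_smul [DecidableEq ι] {M : Matrix ι ι R}
    {e : ι → R} {θ : R} (he : Mᵀ *ᵥ e = θ • e) (x : ι → R) (j : ℕ) :
    (M ^ j *ᵥ x) ⬝ᵥ e = θ ^ j * (x ⬝ᵥ e) := by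
  induction j with
  | zero => simp
  | succ j ih =>
    rw [pow_succ', ← mulVec_mulVec, mulVec_dotProduct_of_transpose_mulVec_eq_smul he, ih, pow_succ',
      mul_assoc]

end Pairing

theorem RingHom.comp_pow_mulVec {ι R S : Type*} [Fintype ι] [DecidableEq ι] [CommSemiring R]
    [CommSemiring S] (f : R →+* S) (M : Matrix ι ι R) (j : ℕ) (x : ι → R) :
    f ∘ (M ^ j *ᵥ x) = M.map f ^ j *ᵥ (f ∘ x) := by
  ext i
  rw [Function.comp_apply, RingHom.map_mulVec, ← RingHom.mapMatrix_apply, map_pow,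
    RingHom.mapMatrix_apply]

theorem norm_ofReal_dotProduct_le {ι : Type*} [Fintype ι] (x : ι → ℝ) (e : ι → ℂ) :
    ‖(fun i => (x i : ℂ)) ⬝ᵥ e‖ ≤ (∑ i, ‖e i‖) * ‖x‖ := by
  calc ‖(fun i => (x i : ℂ)) ⬝ᵥ e‖ ≤ ∑ i, ‖(x i : ℂ) * e i‖ := norm_sum_le _ _
    _ ≤ ∑ i, ‖e i‖ * ‖x‖ := by
      gcongr with i
      rw [norm_mul, Complex.norm_real, mul_comm]
      gcongr
      exact norm_le_pi_norm x i
    _ = (∑ i, ‖e i‖) * ‖x‖ := (Finset.sum_mul ..).symm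

section LatticeApproximation

variable {d : ℕ} {A : Matrix (Fin d) (Fin d) ℤ} {ω : ℝ} {p : ℕ → Fin d → ℝ}

theorem norm_epsSeq_le {L : Set (Fin d → ℝ)} {bL : ℝ}
    (hbLcov : ∀ x : Fin d → ℝ, ∃ v ∈ L, ‖x - v‖ ≤ bL)
    (hpnear : ∀ n, ∀ q ∈ L,
      ‖epsSeq A ω p n‖ ≤ ‖((A.map (Int.cast : ℤ → ℝ)) ^ n) *ᵥ (fun _ => ω) - q‖) (m : ℕ) :
    ‖epsSeq A ω p m‖ ≤ bL := by
  obtain ⟨v, hvL, hv⟩ := hbLcov ((A.map (Int.cast : ℤ → ℝ) ^ m) *ᵥ fun _ => ω)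
  exact (hpnear m v hvL).trans hv

theorem epsSeq_succ (m : ℕ) :
    epsSeq A ω p (m + 1) = A.map (Int.cast : ℤ → ℝ) *ᵥ epsSeq A ω p m + zSeq A p (m + 1) := by
  simp only [epsSeq, zSeq, mulVec_sub]
  rw [pow_succ', ← mulVec_mulVec]
  abel

theorem epsSeq_add_eq_pow_mulVec {n k : ℕ} (hz : ∀ j < k, zSeq A p (n + j + 1) = 0) :
    epsSeq A ω p (n + k) = A.map (Int.cast : ℤ → ℝ) ^ k *ᵥ epsSeq A ω p n := by
  induction k with
  | zero => simp
  | succ k ih =>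
    rw [← add_assoc, epsSeq_succ, hz k k.lt_succ_self, add_zero,
      ih fun j hj => hz j (hj.trans k.lt_succ_self), pow_succ', mulVec_mulVec]

end LatticeApproximation

theorem eps_pairing_small_of_zSeq_zero_general
    (d : ℕ)
    (A : Matrix (Fin d) (Fin d) ℤ)
    (L : AddSubgroup (Fin d → ℝ))
    (bL : ℝ) (hbLcov : ∀ x : Fin d → ℝ, ∃ v ∈ L, ‖x - v‖ ≤ bL)
    (ω : ℝ)
    (p : ℕ → Fin d → ℝ)
    (hpnear : ∀ n, ∀ q ∈ L,
      ‖epsSeq A ω p n‖ ≤ ‖((A.map (Int.cast : ℤ → ℝ)) ^ n) *ᵥ (fun _ => ω) - q‖)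
    (θ : ℂ) (hθ : θ ≠ 0)
    (estar : Fin d → ℂ)
    (heig : (A.map (Int.cast : ℤ → ℂ)).transpose *ᵥ estar = θ • estar)
    (n k : ℕ)
    (hz : ∀ i : ℕ, n + 1 ≤ i → i ≤ n + k → zSeq A p i = 0) :
    ‖∑ i, (epsSeq A ω p n i : ℂ) * estar i‖ ≤
      (‖θ‖)⁻¹ ^ k * (∑ i, ‖estar i‖) * bL := by
  set ε : ℕ → Fin d → ℂ := fun m i => (epsSeq A ω p m i : ℂ)
  have hA : (A.map (Int.cast : ℤ → ℝ)).map Complex.ofRealHom = A.map (Int.cast : ℤ → ℂ) := by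
    ext i j
    simp
  have hpair : ε (n + k) ⬝ᵥ estar = θ ^ k * (ε n ⬝ᵥ estar) := by
    have hε := epsSeq_add_eq_pow_mulVec (ω := ω) fun j (_ : j < k) => hz (n + j + 1) (by omega)
      (by omega)
    change (Complex.ofRealHom ∘ epsSeq A ω p (n + k)) ⬝ᵥ estar = _
    rw [hε, RingHom.comp_pow_mulVec, hA, pow_mulVec_dotProduct_of_transpose_mulVec_eq_smul heig]
    rfl
  have hbound : ‖θ‖ ^ k * ‖ε n ⬝ᵥ estar‖ ≤ (∑ i, ‖estar i‖) * bL := by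
    rw [← norm_pow, ← norm_mul, ← hpair]
    exact (norm_ofReal_dotProduct_le _ _).trans
      (by gcongr; exact norm_epsSeq_le (L := L) hbLcov hpnear _)
  rw [inv_pow, mul_assoc, le_inv_mul_iff₀ (pow_pos (norm_pos_iff.mpr hθ) k)]
  exact hbound

/-- **Lemma.** In the lattice approximation setup, if `e*` is an eigenvector of `Aᵀ` with
eigenvalue `θ ≠ 0` and `z_{n+1} = ⋯ = z_{n+k} = 0`, then
`|⟨ε_n, e*⟩| ≤ |θ|^{−k} ‖e*‖₁ b_L`. -/
theorem eps_pairing_small_of_zSeq_zero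
    (d : ℕ) (hd : 0 < d)
    (A : Matrix (Fin d) (Fin d) ℤ) (hA : IsUnit A.det)
    (L : AddSubgroup (Fin d → ℝ))
    (hspan : Submodule.span ℝ (L : Set (Fin d → ℝ)) = ⊤)
    (hAL : ∀ v ∈ L, (A.map (Int.cast : ℤ → ℝ)) *ᵥ v ∈ L)
    (bL : ℝ) (hbL : 0 < bL) (hbLcov : ∀ x : Fin d → ℝ, ∃ v ∈ L, ‖x - v‖ ≤ bL)
    (ω : ℝ) (hω : ω ∈ Set.Ioo (0:ℝ) 1)
    (p : ℕ → Fin d → ℝ) (hpL : ∀ n, p n ∈ L)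
    (hpnear : ∀ n, ∀ q ∈ L,
      ‖epsSeq A ω p n‖ ≤ ‖((A.map (Int.cast : ℤ → ℝ)) ^ n) *ᵥ (fun _ => ω) - q‖)
    (θ : ℂ) (hθ : θ ≠ 0)
    (estar : Fin d → ℂ)
    (heig : (A.map (Int.cast : ℤ → ℂ)).transpose *ᵥ estar = θ • estar)
    (n k : ℕ) (hk : 1 ≤ k)
    (hz : ∀ i : ℕ, n + 1 ≤ i → i ≤ n + k → zSeq A p i = 0) :
    ‖∑ i, (epsSeq A ω p n i : ℂ) * estar i‖ ≤
      (‖θ‖)⁻¹ ^ k * (∑ i, ‖estar i‖) * bL :=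
  eps_pairing_small_of_zSeq_zero_general d A L bL hbLcov ω p hpnear θ hθ estar heig n k hz

end
end

section
/- Let Γ be the ℤ-span of vectors x₁,…,x_k ∈ ℝ^d with k ≥ d, and assume Γ is a full-rank lattice in ℝ^d (discrete and spanning ℝ^d over ℝ). Let Γ* = { v ∈ ℝ^d : ⟨v, z⟩ ∈ ℤ for all z ∈ Γ } be the dual lattice, and for u ∈ ℝ^d set ‖u‖_{ℝ^d/Γ*} = min{ ‖u − v‖_∞ : v ∈ Γ* }. Then there exist constants c₁, c₂ > 0 (depending on x₁,…,x_k) such that for every u ∈ ℝ^d: c₁·‖u‖_{ℝ^d/Γ*} ≤ max_{j ≤ k} ‖⟨u, x_j⟩‖_{ℝ/ℤ} ≤ c₂·‖u‖_{ℝ^d/Γ*}. -/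
open Set

noncomputable section

/-- Distance from a real number to the nearest integer: `‖t‖_{ℝ/ℤ}`. -/
def distToInt (t : ℝ) : ℝ := |t - round t|

/-- The dual lattice of the `ℤ`-span `Γ` of the vectors `x j`:
`Γ* = {v : ⟨v, z⟩ ∈ ℤ for all z ∈ Γ}`. -/
def dualLattice {d k : ℕ} (x : Fin k → Fin d → ℝ) : Set (Fin d → ℝ) :=
  {v | ∀ z ∈ AddSubgroup.closure (Set.range x), ∃ m : ℤ, ∑ i, v i * z i = (m : ℝ)}

/-- `ℓ^∞`-distance from `u` to the dual lattice `Γ*`, i.e. `‖u‖_{ℝ^d/Γ*}`. -/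
def distToDual {d k : ℕ} (x : Fin k → Fin d → ℝ) (u : Fin d → ℝ) : ℝ :=
  sInf {t : ℝ | ∃ v ∈ dualLattice x, t = ‖u - v‖}

/-!
Write `F u = max_j ‖⟨u, x_j⟩‖_{ℝ/ℤ}`. Since `F` is invariant under `Γ*` and
`F w ≤ max_j |⟨w, x_j⟩| ≤ C ‖w‖`, we get `F u ≤ C ‖u‖_{ℝ^d/Γ*}`.

Conversely, discreteness makes `Γ` a `ℤ`-lattice; take a `ℤ`-basis `b` of `Γ` and the dual
basis `b*` of `ℝ^d` (`⟨b*_i, b_j⟩ = δ_ij`). Rounding the coordinates `⟨u, b_j⟩` of `u` in `b*`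
gives `v ∈ Γ*` with `‖u - v‖ ≤ ∑_j ‖⟨u, b_j⟩‖_{ℝ/ℤ} ‖b*_j‖`, and since each `b_j` is an integer
combination of the `x_i`, subadditivity of the norm of `ℝ/ℤ` gives
`‖⟨u, b_j⟩‖_{ℝ/ℤ} ≤ N_j F u`.
-/

lemma distToInt_le_abs (t : ℝ) : distToInt t ≤ |t| := by
  simpa [distToInt] using round_le t 0

section dotProductCircle

variable {n : Type*} [Fintype n]

-- Read in `ℝ/ℤ`, `distToInt` becomes a norm, so subadditivity in `z` comes for free.
def dotProductCircle (u : n → ℝ) : (n → ℝ) →+ UnitAddCircle :=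
  AddMonoidHom.mk' (fun z => ((u ⬝ᵥ z : ℝ) : UnitAddCircle)) fun z w => by
    rw [dotProduct_add, AddCircle.coe_add]

lemma norm_dotProductCircle (u z : n → ℝ) : ‖dotProductCircle u z‖ = distToInt (u ⬝ᵥ z) :=
  UnitAddCircle.norm_eq

lemma dotProductCircle_sub_apply (u v z : n → ℝ) :
    dotProductCircle (u - v) z = dotProductCircle u z - dotProductCircle v z := by
  simp only [dotProductCircle, AddMonoidHom.mk'_apply, sub_dotProduct, AddCircle.coe_sub]

lemma dotProductCircle_apply_eq_zero_iff {u z : n → ℝ} :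
    dotProductCircle u z = 0 ↔ ∃ m : ℤ, u ⬝ᵥ z = m := by
  rw [dotProductCircle, AddMonoidHom.mk'_apply, AddCircle.coe_eq_zero_iff]
  simp only [zsmul_eq_mul, mul_one, eq_comm]

lemma norm_dotProductCircle_le (u z : n → ℝ) : ‖dotProductCircle u z‖ ≤ ‖u‖ * ∑ i, |z i| := by
  rw [norm_dotProductCircle, Finset.mul_sum]
  refine (distToInt_le_abs _).trans ((Finset.abs_sum_le_sum_abs _ _).trans ?_)
  gcongr with i
  rw [abs_mul]
  gcongr
  exact norm_le_pi_norm u i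

end dotProductCircle

theorem exists_norm_map_le_mul_iSup_of_mem_closure {G E κ : Type*} [AddGroup G]
    [SeminormedAddGroup E] [Finite κ] {x : κ → G} {g : G}
    (hg : g ∈ AddSubgroup.closure (range x)) :
    ∃ N : ℕ, ∀ f : G →+ E, ‖f g‖ ≤ N * ⨆ j, ‖f (x j)‖ := by
  induction hg using AddSubgroup.closure_induction with
  | mem g hg =>
    obtain ⟨j, rfl⟩ := hg
    exact ⟨1, fun f => by
      simpa using le_ciSup (f := fun j => ‖f (x j)‖) (Set.finite_range _).bddAbove j⟩
  | zero => exact ⟨0, fun f => by simp⟩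
  | add g h _ _ hg hh =>
    obtain ⟨M, hM⟩ := hg
    obtain ⟨N, hN⟩ := hh
    refine ⟨M + N, fun f => ?_⟩
    rw [map_add, Nat.cast_add, add_mul]
    exact (norm_add_le _ _).trans (add_le_add (hM f) (hN f))
  | neg g _ hg =>
    obtain ⟨N, hN⟩ := hg
    exact ⟨N, fun f => by simpa using hN f⟩

def dotProductForm (n : Type*) [Fintype n] : LinearMap.BilinForm ℝ (n → ℝ) :=
  dotProductBilin ℝ ℝ

lemma dotProductForm_nondegenerate (n : Type*) [Fintype n] : (dotProductForm n).Nondegenerate :=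
  ⟨fun v h => dotProduct_self_eq_zero.1 (h v), fun w h => dotProduct_self_eq_zero.1 (h w)⟩

theorem exists_dotProductCircle_eq_zero_and_norm_sub_le {n ι : Type*} [Fintype n] [Fintype ι]
    [DecidableEq ι] (b : Module.Basis ι ℝ (n → ℝ)) (u : n → ℝ) :
    ∃ v : n → ℝ, (∀ j, dotProductCircle v (b j) = 0) ∧
      ‖u - v‖ ≤ ∑ j, ‖dotProductCircle u (b j)‖ *
        ‖(dotProductForm n).dualBasis (dotProductForm_nondegenerate n) b j‖ := by
  set b' := (dotProductForm n).dualBasis (dotProductForm_nondegenerate n) b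
  have repr_b' (w : n → ℝ) (j : ι) : b'.repr w j = w ⬝ᵥ b j :=
    LinearMap.BilinForm.dualBasis_repr_apply _ b w j
  set v := b'.equivFun.symm fun j => (round (u ⬝ᵥ b j) : ℝ)
  have hv (j : ι) : v ⬝ᵥ b j = round (u ⬝ᵥ b j) := by
    rw [← repr_b', ← b'.equivFun_apply, LinearEquiv.apply_symm_apply]
  refine ⟨v, fun j => dotProductCircle_apply_eq_zero_iff.2 ⟨_, hv j⟩, ?_⟩
  calc ‖u - v‖ = ‖∑ j, (u ⬝ᵥ b j - round (u ⬝ᵥ b j)) • b' j‖ := by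
        rw [← b'.sum_repr (u - v)]
        simp only [repr_b', sub_dotProduct, hv]
    _ ≤ ∑ j, ‖(u ⬝ᵥ b j - round (u ⬝ᵥ b j)) • b' j‖ := norm_sum_le _ _
    _ = ∑ j, ‖dotProductCircle u (b j)‖ * ‖b' j‖ := by
        simp only [norm_smul, Real.norm_eq_abs, norm_dotProductCircle, distToInt]

section dualLattice

variable {d k : ℕ} {x : Fin k → Fin d → ℝ}

lemma mem_dualLattice_iff {v : Fin d → ℝ} :
    v ∈ dualLattice x ↔ AddSubgroup.closure (range x) ≤ (dotProductCircle v).ker := by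
  simp only [SetLike.le_def, AddMonoidHom.mem_ker, dotProductCircle_apply_eq_zero_iff]
  rfl

lemma zero_mem_dualLattice : (0 : Fin d → ℝ) ∈ dualLattice x :=
  fun _ _ => ⟨0, by simp⟩

lemma distToDual_le {u v : Fin d → ℝ} (hv : v ∈ dualLattice x) : distToDual x u ≤ ‖u - v‖ :=
  csInf_le ⟨0, by rintro _ ⟨w, -, rfl⟩; exact norm_nonneg _⟩ ⟨v, hv, rfl⟩

lemma le_distToDual {u : Fin d → ℝ} {c : ℝ} (h : ∀ v ∈ dualLattice x, c ≤ ‖u - v‖) :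
    c ≤ distToDual x u :=
  le_csInf ⟨_, 0, zero_mem_dualLattice, rfl⟩ (by rintro _ ⟨v, hv, rfl⟩; exact h v hv)

theorem iSup_norm_dotProductCircle_le_mul_distToDual (u : Fin d → ℝ) :
    ⨆ j, ‖dotProductCircle u (x j)‖ ≤ (1 + ∑ j, ∑ i, |x j i|) * distToDual x u := by
  set M := 1 + ∑ j, ∑ i, |x j i|
  have hM : 0 < M := by positivity
  rw [← div_le_iff₀' hM]
  refine le_distToDual fun v hv => ?_
  rw [div_le_iff₀' hM]
  refine Real.iSup_le (fun j => ?_) (by positivity)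
  have hvj : dotProductCircle v (x j) = 0 :=
    mem_dualLattice_iff.1 hv (AddSubgroup.subset_closure (mem_range_self j))
  have hxj : ∑ i, |x j i| ≤ M :=
    le_add_of_nonneg_of_le zero_le_one
      (Finset.single_le_sum (f := fun j => ∑ i, |x j i|) (fun j _ => by positivity)
        (Finset.mem_univ j))
  calc ‖dotProductCircle u (x j)‖ = ‖dotProductCircle (u - v) (x j)‖ := by
        rw [dotProductCircle_sub_apply, hvj, sub_zero]
    _ ≤ ‖u - v‖ * ∑ i, |x j i| := norm_dotProductCircle_le _ _
    _ ≤ M * ‖u - v‖ := by rw [mul_comm]; gcongr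

theorem exists_distToDual_le_mul_iSup (hspan : Submodule.span ℝ (range x) = ⊤)
    (hdisc : ∃ a : ℝ, 0 < a ∧ ∀ v ∈ AddSubgroup.closure (range x), v ≠ 0 → a ≤ ‖v‖) :
    ∃ C > 0, ∀ u, distToDual x u ≤ C * ⨆ j, ‖dotProductCircle u (x j)‖ := by
  classical
  obtain ⟨a, ha, hdisc⟩ := hdisc
  set Γ := AddSubgroup.toIntSubmodule (AddSubgroup.closure (range x))
  have : DiscreteTopology Γ :=
    .of_forall_le_norm ha fun v hv => hdisc v v.2 (by simpa using hv)
  have : IsZLattice ℝ Γ := ⟨by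
    rw [eq_top_iff, ← hspan]
    exact Submodule.span_mono AddSubgroup.subset_closure⟩
  set b := (Module.Free.chooseBasis ℤ Γ).ofZLatticeBasis ℝ Γ
  have hb : AddSubgroup.closure (range b) = AddSubgroup.closure (range x) := by
    rw [← Submodule.span_int_eq_addSubgroupClosure, Module.Basis.ofZLatticeBasis_span]
    rfl
  choose N hN using fun j =>
    exists_norm_map_le_mul_iSup_of_mem_closure (E := UnitAddCircle)
      (hb ▸ AddSubgroup.subset_closure (mem_range_self j))
  set b' := (dotProductForm (Fin d)).dualBasis (dotProductForm_nondegenerate _) b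
  refine ⟨1 + ∑ j, ‖b' j‖ * N j, by positivity, fun u => ?_⟩
  set F := ⨆ j, ‖dotProductCircle u (x j)‖
  have hF : 0 ≤ F := Real.iSup_nonneg fun _ => norm_nonneg _
  obtain ⟨v, hvb, huv⟩ := exists_dotProductCircle_eq_zero_and_norm_sub_le b u
  have hv : v ∈ dualLattice x := by
    rw [mem_dualLattice_iff, ← hb, AddSubgroup.closure_le]
    rintro _ ⟨j, rfl⟩
    exact hvb j
  calc distToDual x u ≤ ‖u - v‖ := distToDual_le hv
    _ ≤ ∑ j, ‖dotProductCircle u (b j)‖ * ‖b' j‖ := huv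
    _ ≤ ∑ j, N j * F * ‖b' j‖ := by gcongr with j; exact hN j _
    _ = (∑ j, ‖b' j‖ * N j) * F := by
        rw [Finset.sum_mul]
        exact Finset.sum_congr rfl fun j _ => by ring
    _ ≤ (1 + ∑ j, ‖b' j‖ * N j) * F := by gcongr; exact le_add_of_nonneg_left zero_le_one

end dualLattice

theorem distToDual_comparable_general
    (d k : ℕ)
    (x : Fin k → Fin d → ℝ)
    (hspan : Submodule.span ℝ (Set.range x) = ⊤)
    (hdisc : ∃ a : ℝ, 0 < a ∧
      ∀ v ∈ AddSubgroup.closure (Set.range x), v ≠ 0 → a ≤ ‖v‖) :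
    ∃ c₁ c₂ : ℝ, 0 < c₁ ∧ 0 < c₂ ∧
      ∀ u : Fin d → ℝ,
        c₁ * distToDual x u ≤ (⨆ j : Fin k, distToInt (∑ i, u i * x j i)) ∧
        (⨆ j : Fin k, distToInt (∑ i, u i * x j i)) ≤ c₂ * distToDual x u := by
  have hF (u : Fin d → ℝ) :
      ⨆ j, distToInt (∑ i, u i * x j i) = ⨆ j, ‖dotProductCircle u (x j)‖ := by
    simp only [norm_dotProductCircle]
    rfl
  obtain ⟨C, hC, hlower⟩ := exists_distToDual_le_mul_iSup hspan hdisc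
  refine ⟨C⁻¹, 1 + ∑ j, ∑ i, |x j i|, by positivity, by positivity, fun u => ⟨?_, ?_⟩⟩
  · rw [hF, inv_mul_le_iff₀ hC]
    exact hlower u
  · rw [hF]
    exact iSup_norm_dotProductCircle_le_mul_distToDual u

/-- **Lemma.** If `Γ = ℤ[x₁,…,x_k]` is a full-rank lattice in `ℝ^d` (with `k ≥ d`) and `Γ*`
its dual, then `‖u‖_{ℝ^d/Γ*} ≍ max_{j ≤ k} ‖⟨u, x_j⟩‖_{ℝ/ℤ}`, with implied constants
depending only on the `x_j`. -/
theorem distToDual_comparable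
    (d k : ℕ) (hd : 0 < d) (hk : d ≤ k)
    (x : Fin k → Fin d → ℝ)
    (hspan : Submodule.span ℝ (Set.range x) = ⊤)
    (hdisc : ∃ a : ℝ, 0 < a ∧
      ∀ v ∈ AddSubgroup.closure (Set.range x), v ≠ 0 → a ≤ ‖v‖) :
    ∃ c₁ c₂ : ℝ, 0 < c₁ ∧ 0 < c₂ ∧
      ∀ u : Fin d → ℝ,
        c₁ * distToDual x u ≤ (⨆ j : Fin k, distToInt (∑ i, u i * x j i)) ∧
        (⨆ j : Fin k, distToInt (∑ i, u i * x j i)) ≤ c₂ * distToDual x u :=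
  distToDual_comparable_general d k x hspan hdisc

end
end

section
/- Let p(x) = x^d − a_{d−1}x^{d−1} − ⋯ − a₁x − a₀ ∈ ℤ[x] with a₀ ≠ 0 and with d distinct complex roots θ₁,…,θ_d. Let 1 ≤ κ ≤ d be such that |θ_j| < 1 for all j > κ. Let (L_n)_{n≥0} be a sequence of integers satisfying L_{n+d} = Σ_{j=0}^{d−1} a_j L_{n+j} for all n ≥ 0. Let P ∈ ℤ[X] and α ∈ ℂ be such that P(1/θ_j) = α for all 1 ≤ j ≤ κ. Then there exists a sequence of integers (K_n) such that |α·L_n − K_n| → 0 as n → ∞; in particular, if α is real then the distance from α·L_n to the nearest integer tends to 0. -/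
/-!
By the Vandermonde determinant, `L n = ∑ j, c j * θ j ^ n`. Writing `P = ∑ pₖ Xᵏ` and
`K n = ∑ pₖ L (n - k)`, for `n > deg P` one gets
`α L n - K n = ∑ j, c j (α - P(θ j⁻¹)) θ j ^ n`: the terms with `j < κ` vanish and the
remaining ones decay geometrically.
-/

open Polynomial Filter Finset

namespace LinearRecurrence

theorem isSolution_pow_of_pow_order_eq {R : Type*} [CommSemiring R] (E : LinearRecurrence R)
    {q : R} (hq : q ^ E.order = ∑ i, E.coeffs i * q ^ (i : ℕ)) :
    E.IsSolution fun n => q ^ n := by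
  intro n
  simp only [pow_add, hq, mul_sum]
  exact sum_congr rfl fun _ _ => by ring

theorem exists_eq_sum_mul_pow {K : Type*} [Field K] (E : LinearRecurrence K)
    {θ : Fin E.order → K} (hinj : Function.Injective θ)
    (hθ : ∀ j, E.IsSolution fun n => θ j ^ n) {u : ℕ → K} (hu : E.IsSolution u) :
    ∃ c : Fin E.order → K, ∀ n, u n = ∑ j, c j * θ j ^ n := by
  have hV : IsUnit (Matrix.vandermonde θ) :=
    (Matrix.isUnit_iff_isUnit_det _).2 (Matrix.det_vandermonde_ne_zero_iff.2 hinj).isUnit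
  obtain ⟨c, hc⟩ := Matrix.vecMul_surjective_iff_isUnit.2 hV fun i => u i
  have hsol : E.IsSolution fun n => ∑ j, c j * θ j ^ n := by
    have := E.solSpace.sum_mem fun j (_ : j ∈ univ) => E.solSpace.smul_mem (c j) (hθ j)
    rw [E.is_sol_iff_mem_solSpace]
    convert this using 1
    ext n
    simp [Finset.sum_apply]
  refine ⟨c, congrFun ((E.eq_iff_eqOn_range_order _ _ hu hsol).2 fun i hi => ?_)⟩
  have := congrFun hc ⟨i, Finset.mem_range.1 hi⟩
  simp only [Matrix.vecMul, dotProduct, Matrix.vandermonde_apply] at this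
  exact this.symm

end LinearRecurrence

-- `n > natDegree` makes both sides vanish at `θ = 0`, where `0⁻¹ = 0`.
theorem sum_range_coeff_mul_pow_sub {R K : Type*} [CommRing R] [Field K] [Algebra R K]
    (P : R[X]) (θ : K) {n : ℕ} (hn : P.natDegree < n) :
    ∑ k ∈ range (P.natDegree + 1), algebraMap R K (P.coeff k) * θ ^ (n - k) =
      θ ^ n * aeval θ⁻¹ P := by
  rw [aeval_eq_sum_range, mul_sum]
  refine sum_congr rfl fun k hk => ?_
  rw [pow_sub_of_lt θ (by grind), Algebra.smul_def, inv_pow]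
  ring

theorem mul_sub_sum_coeff_mul_eq_sum_mul_pow {R K ι : Type*} [CommRing R] [Field K] [Algebra R K]
    [Fintype ι] (P : R[X]) (α : K) {c θ : ι → K} {u : ℕ → K}
    (hu : ∀ n, u n = ∑ j, c j * θ j ^ n) {n : ℕ} (hn : P.natDegree < n) :
    α * u n - ∑ k ∈ range (P.natDegree + 1), algebraMap R K (P.coeff k) * u (n - k) =
      ∑ j, c j * (α - aeval (θ j)⁻¹ P) * θ j ^ n := by
  simp only [hu, mul_sum]
  rw [sum_comm, ← sum_sub_distrib]
  refine sum_congr rfl fun j _ => ?_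
  simp only [mul_left_comm _ (c j), ← mul_sum, sum_range_coeff_mul_pow_sub P (θ j) hn]
  ring

theorem tendsto_sum_mul_pow_atTop_nhds_zero {𝕜 ι : Type*} [NormedField 𝕜] [Fintype ι]
    {b θ : ι → 𝕜} (h : ∀ j, b j = 0 ∨ ‖θ j‖ < 1) :
    Tendsto (fun n => ∑ j, b j * θ j ^ n) atTop (nhds 0) := by
  rw [← sum_const_zero (s := (univ : Finset ι))]
  refine tendsto_finsetSum _ fun j _ => ?_
  rcases h j with hb | hθ
  · simp [hb]
  · simpa using (tendsto_pow_atTop_nhds_zero_of_norm_lt_one hθ).const_mul (b j)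

theorem tendsto_abs_sub_round_of_tendsto_abs_sub_intCast {ι : Type*} {l : Filter ι}
    {x : ι → ℝ} {z : ι → ℤ} (h : Tendsto (fun i => |x i - z i|) l (nhds 0)) :
    Tendsto (fun i => |x i - round (x i)|) l (nhds 0) :=
  squeeze_zero (fun _ => abs_nonneg _) (fun i => round_le (x i) (z i)) h

theorem recurrence_fractional_parts_tendsto_zero_general
    (d : ℕ)
    (a : Fin d → ℤ)
    (θ : Fin d → ℂ) (hinj : Function.Injective θ)
    (hroot : ∀ j, θ j ^ d = ∑ i : Fin d, (a i : ℂ) * θ j ^ (i : ℕ))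
    (κ : ℕ)
    (hsmall : ∀ j : Fin d, κ ≤ (j : ℕ) → ‖θ j‖ < 1)
    (L : ℕ → ℤ)
    (hrec : ∀ n : ℕ, L (n + d) = ∑ j : Fin d, a j * L (n + (j : ℕ)))
    (P : Polynomial ℤ) (α : ℂ)
    (hP : ∀ j : Fin d, (j : ℕ) < κ → Polynomial.aeval (θ j)⁻¹ P = α) :
    (∃ K : ℕ → ℤ,
      Tendsto (fun n => ‖α * (L n : ℂ) - (K n : ℂ)‖) atTop (nhds 0)) ∧
    (∀ t : ℝ, α = (t : ℂ) →
      Tendsto (fun n => |t * (L n : ℝ) - (round (t * (L n : ℝ)) : ℝ)|) atTop (nhds 0)) := by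
  let E : LinearRecurrence ℂ := ⟨d, fun i => a i⟩
  have hL : E.IsSolution fun n => (L n : ℂ) := fun n => by
    show (L (n + d) : ℂ) = ∑ i, (a i : ℂ) * L (n + i)
    exact_mod_cast hrec n
  obtain ⟨c, hc⟩ := E.exists_eq_sum_mul_pow hinj
    (fun j => E.isSolution_pow_of_pow_order_eq (hroot j)) hL
  let K : ℕ → ℤ := fun n => ∑ k ∈ range (P.natDegree + 1), P.coeff k * L (n - k)
  have hK :
      ∀ᶠ n in atTop, ∑ j, c j * (α - aeval (θ j)⁻¹ P) * θ j ^ n = α * L n - K n := by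
    filter_upwards [eventually_gt_atTop P.natDegree] with n hn
    rw [← mul_sub_sum_coeff_mul_eq_sum_mul_pow P α hc hn]
    simp [K]
  have hlim : Tendsto (fun n => ‖α * (L n : ℂ) - (K n : ℂ)‖) atTop (nhds 0) := by
    refine ((tendsto_sum_mul_pow_atTop_nhds_zero fun j => ?_).congr' hK).norm.trans (by simp)
    by_cases hj : (j : ℕ) < κ
    · simp [hP j hj]
    · exact .inr (hsmall j (not_lt.1 hj))
  refine ⟨⟨K, hlim⟩, fun t ht => ?_⟩
  refine tendsto_abs_sub_round_of_tendsto_abs_sub_intCast (z := K) ?_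
  subst ht
  convert hlim using 2 with n
  rw [← Real.norm_eq_abs, ← Complex.norm_real]
  norm_cast

/-- **Lemma.** Let `p(x) = x^d − a_{d−1}x^{d−1} − ⋯ − a₀ ∈ ℤ[x]`, `a₀ ≠ 0`, with distinct
complex roots `θ₁,…,θ_d`, of which those beyond the first `κ` lie strictly inside the unit
circle. If `(L_n)` is an integer sequence satisfying the corresponding linear recurrence and
`P ∈ ℤ[X]` takes the common value `α` at `1/θ_j` for all `j ≤ κ`, then `α L_n` converges to
the integers: there are integers `K_n` with `|α L_n − K_n| → 0`; in particular, if `α` is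
real, the distance from `α L_n` to the nearest integer tends to `0`. -/
theorem recurrence_fractional_parts_tendsto_zero
    (d : ℕ) (hd : 1 ≤ d)
    (a : Fin d → ℤ) (ha0 : a ⟨0, hd⟩ ≠ 0)
    (θ : Fin d → ℂ) (hinj : Function.Injective θ)
    (hroot : ∀ j, θ j ^ d = ∑ i : Fin d, (a i : ℂ) * θ j ^ (i : ℕ))
    (κ : ℕ) (hκ1 : 1 ≤ κ) (hκd : κ ≤ d)
    (hsmall : ∀ j : Fin d, κ ≤ (j : ℕ) → ‖θ j‖ < 1)
    (L : ℕ → ℤ)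
    (hrec : ∀ n : ℕ, L (n + d) = ∑ j : Fin d, a j * L (n + (j : ℕ)))
    (P : Polynomial ℤ) (α : ℂ)
    (hP : ∀ j : Fin d, (j : ℕ) < κ → Polynomial.aeval (θ j)⁻¹ P = α) :
    (∃ K : ℕ → ℤ,
      Tendsto (fun n => ‖α * (L n : ℂ) - (K n : ℂ)‖) atTop (nhds 0)) ∧
    (∀ t : ℝ, α = (t : ℂ) →
      Tendsto (fun n => |t * (L n : ℝ) - (round (t * (L n : ℝ)) : ℝ)|) atTop (nhds 0)) :=
  recurrence_fractional_parts_tendsto_zero_general d a θ hinj hroot κ hsmall L hrec P α hP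
end

section
/- For every integer m ≥ 1 and every Δ > 0 there exists δ = δ(m, Δ) ∈ (0, 1/2) such that for all non-negative real numbers G₁,…,G_m with Σ_{j=1}^m G_j ≥ Δ and every s₀ ≥ 0, the Lebesgue measure of the set { (x₁,…,x_m) ∈ [0,1]^m : the fractional part of s₀ + Σ_{j=1}^m G_j·cos(2π x_j) lies in [δ, 1−δ] } is at least 1/2. -/
/-!
Pick a coordinate `i` with `G i ≥ Δ / m` and integrate over it last: it suffices that for every
`c` and every `g ≥ 96 δ`, the set of `t ∈ [0, 1]` with `c + g cos 2πt` within `δ` of an integer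
has measure at most `1/2`. Away from three intervals of total length `1/4`, `[0, 1]` splits into
two pieces on which `t ↦ cos 2πt` expands distances, so on each piece the preimage of the
`δ`-window around an integer has length at most `2δ/g`; at most `2g + 3` integers are in range,
giving the bound `1/4 + 8δ + 12δ/g ≤ 1/2`.
-/

open MeasureTheory Real Set
open scoped ENNReal

lemma exists_int_abs_sub_lt_of_fract_notMem_Icc {x δ : ℝ} (h : Int.fract x ∉ Icc δ (1 - δ)) :
    ∃ n : ℤ, |x - n| < δ := by
  refine ⟨round x, ?_⟩
  rw [abs_sub_round_eq_min, min_lt_iff]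
  rw [mem_Icc, not_and_or, not_le, not_le] at h
  exact h.imp id fun h => by linarith

lemma card_Icc_ceil_floor_le {a b : ℝ} (hab : a ≤ b) :
    ((Finset.Icc ⌈a⌉ ⌊b⌋).card : ℝ) ≤ b - a + 1 := by
  have hle : ⌈a⌉ ≤ ⌊b⌋ + 1 := by
    have : (⌈a⌉ : ℝ) < ⌊b⌋ + 2 := by
      linarith [Int.ceil_lt_add_one a, Int.lt_floor_add_one b]
    have : ⌈a⌉ < ⌊b⌋ + 2 := by exact_mod_cast this
    omega
  have hcard : (((Finset.Icc ⌈a⌉ ⌊b⌋).card : ℤ) : ℝ) = ⌊b⌋ + 1 - ⌈a⌉ := by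
    rw [Int.card_Icc_of_le _ _ hle]; push_cast; ring
  rw [Int.cast_natCast] at hcard
  linarith [Int.floor_le b, Int.le_ceil a]

lemma two_mul_min_le_sin_pi_mul {u : ℝ} (h₀ : 0 ≤ u) (h₁ : u ≤ 1) :
    2 * min u (1 - u) ≤ sin (π * u) := by
  have jordan : ∀ x, 0 ≤ x → x ≤ 1 / 2 → 2 * x ≤ sin (π * x) := fun x hx₀ hx₁ => by
    have := mul_le_sin (x := π * x) (by positivity) (by nlinarith [pi_pos])
    rwa [← mul_assoc, div_mul_cancel₀ _ pi_ne_zero] at this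
  rcases le_total u (1 / 2) with hu | hu
  · rw [min_eq_left (by linarith)]
    exact jordan u h₀ hu
  · rw [min_eq_right (by linarith), ← sin_pi_sub, ← mul_one_sub]
    exact jordan (1 - u) (by linarith) (by linarith)

lemma abs_sub_le_abs_cos_sub_cos_of_mem_Icc {s t : ℝ} (hs : s ∈ Icc (1 / 16 : ℝ) (7 / 16))
    (ht : t ∈ Icc (1 / 16 : ℝ) (7 / 16)) :
    |s - t| ≤ |cos (2 * π * s) - cos (2 * π * t)| := by
  obtain ⟨hs₁, hs₂⟩ := hs
  obtain ⟨ht₁, ht₂⟩ := ht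
  have hprod : cos (2 * π * s) - cos (2 * π * t) =
      -2 * sin (π * (s + t)) * sin (π * (s - t)) := by
    rw [cos_sub_cos]; ring_nf
  have hsum : 1 / 4 ≤ sin (π * (s + t)) := by
    refine le_trans ?_ (two_mul_min_le_sin_pi_mul (by linarith) (by linarith))
    linarith [le_min (by linarith : 1 / 8 ≤ s + t) (by linarith : (1 : ℝ) / 8 ≤ 1 - (s + t))]
  have hdiff : 2 * |s - t| ≤ |sin (π * (s - t))| := by
    have hst : |s - t| ≤ 1 / 2 := abs_le.2 ⟨by linarith, by linarith⟩
    have := mul_abs_le_abs_sin (x := π * (s - t))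
      (by rw [abs_mul, abs_of_pos pi_pos]; nlinarith [pi_pos])
    rwa [abs_mul, abs_of_pos pi_pos, ← mul_assoc, div_mul_cancel₀ _ pi_ne_zero] at this
  rw [hprod, abs_mul, abs_mul, abs_of_pos (by linarith : (0 : ℝ) < sin (π * (s + t)))]
  norm_num
  nlinarith [abs_nonneg (s - t)]

lemma abs_sub_le_abs_cos_sub_cos_of_mem_Icc' {s t : ℝ} (hs : s ∈ Icc (9 / 16 : ℝ) (15 / 16))
    (ht : t ∈ Icc (9 / 16 : ℝ) (15 / 16)) :
    |s - t| ≤ |cos (2 * π * s) - cos (2 * π * t)| := by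
  have h := abs_sub_le_abs_cos_sub_cos_of_mem_Icc (s := 1 - s) (t := 1 - t)
    ⟨by linarith [hs.2], by linarith [hs.1]⟩ ⟨by linarith [ht.2], by linarith [ht.1]⟩
  rwa [sub_sub_sub_cancel_left, abs_sub_comm, mul_one_sub, mul_one_sub, cos_two_pi_sub,
    cos_two_pi_sub] at h

lemma volume_setOf_abs_sub_lt_le {E : Set ℝ} {φ : ℝ → ℝ} {K : ℝ} (hK₀ : 0 ≤ K)
    (hK : ∀ s ∈ E, ∀ t ∈ E, |s - t| ≤ K * |φ s - φ t|) (y r : ℝ) :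
    volume {t ∈ E | |φ t - y| < r} ≤ ENNReal.ofReal (2 * K * r) := by
  refine (Real.volume_le_diam _).trans (Metric.ediam_le_of_forall_dist_le ?_)
  rintro s ⟨hs, hsy⟩ t ⟨ht, hty⟩
  have htri := abs_sub_le (φ s) y (φ t)
  rw [abs_sub_comm y] at htri
  calc dist s t = |s - t| := Real.dist_eq s t
    _ ≤ K * |φ s - φ t| := hK s hs t ht
    _ ≤ 2 * K * r := by nlinarith

lemma volume_setOf_exists_int_abs_sub_lt_le {E : Set ℝ} {φ : ℝ → ℝ} {K a b δ : ℝ}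
    (hK₀ : 0 ≤ K) (hK : ∀ s ∈ E, ∀ t ∈ E, |s - t| ≤ K * |φ s - φ t|)
    (hφ : MapsTo φ E (Icc a b)) (hab : a ≤ b) (hδ₀ : 0 ≤ δ) (hδ₁ : δ ≤ 1) :
    volume {t ∈ E | ∃ n : ℤ, |φ t - n| < δ} ≤
      ENNReal.ofReal ((b - a + 3) * (2 * K * δ)) := by
  set N := Finset.Icc ⌈a - 1⌉ ⌊b + 1⌋
  have hcover :
      {t ∈ E | ∃ n : ℤ, |φ t - n| < δ} ⊆ ⋃ n ∈ N, {t ∈ E | |φ t - n| < δ} := by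
    rintro t ⟨ht, n, hn⟩
    refine mem_biUnion (Int.cast_mem_Icc_iff.1 ?_) ⟨ht, hn⟩
    have := hφ ht
    rw [abs_lt] at hn
    constructor <;> linarith [this.1, this.2]
  calc volume {t ∈ E | ∃ n : ℤ, |φ t - n| < δ}
      ≤ ∑ n ∈ N, volume {t ∈ E | |φ t - n| < δ} :=
        (measure_mono hcover).trans (measure_biUnion_finset_le _ _)
    _ ≤ ∑ n ∈ N, ENNReal.ofReal (2 * K * δ) :=
        Finset.sum_le_sum fun n _ => volume_setOf_abs_sub_lt_le hK₀ hK _ _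
    _ = ENNReal.ofReal (N.card * (2 * K * δ)) := by
        rw [Finset.sum_const, nsmul_eq_mul, ENNReal.ofReal_mul (p := N.card) (by positivity),
          ENNReal.ofReal_natCast]
    _ ≤ ENNReal.ofReal ((b - a + 3) * (2 * K * δ)) := by
        gcongr
        linarith [card_Icc_ceil_floor_le (a := a - 1) (b := b + 1) (by linarith)]

lemma volume_setOf_exists_int_abs_add_mul_cos_sub_lt_le {E : Set ℝ}
    (hE : ∀ s ∈ E, ∀ t ∈ E, |s - t| ≤ |cos (2 * π * s) - cos (2 * π * t)|) {c g δ : ℝ}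
    (hg : 0 < g) (hδ₀ : 0 ≤ δ) (hδ₁ : δ ≤ 1) :
    volume {t ∈ E | ∃ n : ℤ, |c + g * cos (2 * π * t) - n| < δ} ≤
      ENNReal.ofReal (4 * δ + 6 * δ / g) := by
  have hK : ∀ s ∈ E, ∀ t ∈ E,
      |s - t| ≤ g⁻¹ * |c + g * cos (2 * π * s) - (c + g * cos (2 * π * t))| := by
    intro s hs t ht
    rw [add_sub_add_left_eq_sub, ← mul_sub, abs_mul, abs_of_pos hg,
      inv_mul_cancel_left₀ hg.ne']
    exact hE s hs t ht
  have hφ : MapsTo (fun t => c + g * cos (2 * π * t)) E (Icc (c - g) (c + g)) := fun t _ => by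
    have := neg_one_le_cos (2 * π * t)
    have := cos_le_one (2 * π * t)
    constructor <;> nlinarith
  convert volume_setOf_exists_int_abs_sub_lt_le (inv_nonneg.2 hg.le) hK hφ (by linarith)
    hδ₀ hδ₁ using 2
  field_simp
  ring

lemma half_le_volume_setOf_fract_add_mul_cos_mem_Icc {c g δ : ℝ} (hδ₀ : 0 < δ)
    (hδ₁ : δ ≤ 1 / 64) (hg : 96 * δ ≤ g) :
    (1 / 2 : ℝ≥0∞) ≤
      volume {t ∈ Icc (0 : ℝ) 1 | Int.fract (c + g * cos (2 * π * t)) ∈ Icc δ (1 - δ)} := by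
  have hg₀ : 0 < g := by linarith
  set good := {t ∈ Icc (0 : ℝ) 1 | Int.fract (c + g * cos (2 * π * t)) ∈ Icc δ (1 - δ)}
  set bad := fun E : Set ℝ => {t ∈ E | ∃ n : ℤ, |c + g * cos (2 * π * t) - n| < δ}
  have hcover : Icc 0 1 \ good ⊆ (Icc 0 (1 / 16) ∪ Icc (7 / 16) (9 / 16) ∪ Icc (15 / 16) 1) ∪
      (bad (Icc (1 / 16) (7 / 16)) ∪ bad (Icc (9 / 16) (15 / 16))) := by
    rintro t ⟨⟨ht₀, ht₁⟩, hgood⟩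
    obtain ⟨n, hn⟩ := exists_int_abs_sub_lt_of_fract_notMem_Icc fun h => hgood ⟨⟨ht₀, ht₁⟩, h⟩
    rcases le_or_gt t (1 / 16) with h₁ | h₁
    · exact Or.inl (Or.inl (Or.inl ⟨ht₀, h₁⟩))
    rcases le_or_gt t (7 / 16) with h₂ | h₂
    · exact Or.inr (Or.inl ⟨⟨h₁.le, h₂⟩, n, hn⟩)
    rcases le_or_gt t (9 / 16) with h₃ | h₃
    · exact Or.inl (Or.inl (Or.inr ⟨h₂.le, h₃⟩))
    rcases le_or_gt t (15 / 16) with h₄ | h₄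
    · exact Or.inr (Or.inr ⟨⟨h₃.le, h₄⟩, n, hn⟩)
    · exact Or.inl (Or.inr ⟨h₄.le, ht₁⟩)
  have hends : volume (Icc (0 : ℝ) (1 / 16) ∪ Icc (7 / 16) (9 / 16) ∪ Icc (15 / 16) 1) ≤
      ENNReal.ofReal (1 / 4) := by
    refine (measure_union_le _ _).trans ((add_le_add_left (measure_union_le _ _) _).trans ?_)
    rw [Real.volume_Icc, Real.volume_Icc, Real.volume_Icc,
      ← ENNReal.ofReal_add (by norm_num) (by norm_num),
      ← ENNReal.ofReal_add (by norm_num) (by norm_num)]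
    exact ENNReal.ofReal_le_ofReal (by norm_num)
  have hbad (E : Set ℝ)
      (hE : ∀ s ∈ E, ∀ t ∈ E, |s - t| ≤ |cos (2 * π * s) - cos (2 * π * t)|) :
      volume (bad E) ≤ ENNReal.ofReal (4 * δ + 6 * δ / g) :=
    volume_setOf_exists_int_abs_add_mul_cos_sub_lt_le hE hg₀ hδ₀.le (by linarith)
  have hcompl : volume (Icc 0 1 \ good) ≤ 1 / 2 := calc
    volume (Icc 0 1 \ good)
      ≤ ENNReal.ofReal (1 / 4) + (ENNReal.ofReal (4 * δ + 6 * δ / g) +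
          ENNReal.ofReal (4 * δ + 6 * δ / g)) :=
        (measure_mono hcover).trans <| (measure_union_le _ _).trans <| add_le_add hends <|
          (measure_union_le _ _).trans <| add_le_add
            (hbad _ fun s hs t ht => abs_sub_le_abs_cos_sub_cos_of_mem_Icc hs ht)
            (hbad _ fun s hs t ht => abs_sub_le_abs_cos_sub_cos_of_mem_Icc' hs ht)
    _ ≤ ENNReal.ofReal (1 / 2) := by
        rw [← ENNReal.ofReal_add (by positivity) (by positivity),
          ← ENNReal.ofReal_add (by positivity) (by positivity)]
        refine ENNReal.ofReal_le_ofReal ?_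
        have : 6 * δ / g ≤ 1 / 16 := by rw [div_le_iff₀ hg₀]; linarith
        linarith
    _ = 1 / 2 := by rw [ENNReal.ofReal_div_of_pos two_pos]; simp
  have hunit : volume (Icc (0 : ℝ) 1) ≤ volume good + volume (Icc 0 1 \ good) :=
    (measure_mono (union_sdiff_self.symm ▸ subset_union_right)).trans (measure_union_le _ _)
  rw [Real.volume_Icc, sub_zero, ENNReal.ofReal_one] at hunit
  rw [← ENNReal.add_halves 1] at hunit
  exact ENNReal.le_of_add_le_add_right (by simp) (hunit.trans (add_le_add_right hcompl _))

lemma mul_volume_le_of_le_volume_insertNth {α : Type*} [MeasureSpace α]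
    [SigmaFinite (volume : Measure α)] {n : ℕ} (i : Fin (n + 1)) {S : Set (Fin (n + 1) → α)}
    (hS : MeasurableSet S) {C : Set (Fin n → α)} (hC : MeasurableSet C) {p : ℝ≥0∞}
    (h : ∀ y ∈ C, p ≤ volume {t : α | Fin.insertNth i t y ∈ S}) :
    p * volume C ≤ volume S := by
  have hfubini : volume S = ∫⁻ y, volume {t : α | Fin.insertNth i t y ∈ S} := by
    rw [← ((volume_preserving_piFinSuccAbove (fun _ => α) i).symm _).measure_preimage
      hS.nullMeasurableSet, Measure.volume_eq_prod, Measure.prod_apply_symm]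
    · rfl
    · exact (MeasurableEquiv.piFinSuccAbove (fun _ => α) i).symm.measurable hS
  calc p * volume C = ∫⁻ _ in C, p := (setLIntegral_const C p).symm
    _ ≤ ∫⁻ y in C, volume {t : α | Fin.insertNth i t y ∈ S} := setLIntegral_mono' hC h
    _ ≤ ∫⁻ y, volume {t : α | Fin.insertNth i t y ∈ S} := setLIntegral_le_lintegral _ _
    _ = volume S := hfubini.symm

lemma exists_div_card_le_of_le_sum {ι : Type*} [Fintype ι] [Nonempty ι] {G : ι → ℝ} {Δ : ℝ}
    (h : Δ ≤ ∑ j, G j) : ∃ i, Δ / Fintype.card ι ≤ G i := by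
  obtain ⟨i, -, hi⟩ := Finset.exists_le_of_sum_le (f := fun _ => Δ / Fintype.card ι) (g := G)
    Finset.univ_nonempty (by
      rwa [Finset.sum_const, Finset.card_univ, nsmul_eq_mul, mul_div_cancel₀ _ (by positivity)])
  exact ⟨i, hi⟩

lemma half_le_volume_setOf_fract_sum_mul_cos_mem_Icc {n : ℕ} (G : Fin (n + 1) → ℝ)
    (i : Fin (n + 1)) (s₀ : ℝ) {δ : ℝ} (hδ₀ : 0 < δ) (hδ₁ : δ ≤ 1 / 64) (hGi : 96 * δ ≤ G i) :
    (1 / 2 : ℝ≥0∞) ≤ volume {x : Fin (n + 1) → ℝ | (∀ j, x j ∈ Icc (0 : ℝ) 1) ∧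
      Int.fract (s₀ + ∑ j, G j * cos (2 * π * x j)) ∈ Icc δ (1 - δ)} := by
  set S := {x : Fin (n + 1) → ℝ | (∀ j, x j ∈ Icc (0 : ℝ) 1) ∧
    Int.fract (s₀ + ∑ j, G j * cos (2 * π * x j)) ∈ Icc δ (1 - δ)}
  have hslice (y : Fin n → ℝ) (hy : y ∈ Icc 0 1) :
      {t ∈ Icc 0 1 | Int.fract ((s₀ + ∑ j, G (i.succAbove j) * cos (2 * π * y j)) +
        G i * cos (2 * π * t)) ∈ Icc δ (1 - δ)} ⊆ {t | Fin.insertNth i t y ∈ S} := by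
    rintro t ⟨ht, hfract⟩
    refine ⟨(Fin.forall_iff_succAbove i).2
      ⟨by simpa using ht, fun j => by simpa using ⟨hy.1 j, hy.2 j⟩⟩, ?_⟩
    simp only [Fin.sum_univ_succAbove _ i, Fin.insertNth_apply_same,
      Fin.insertNth_apply_succAbove]
    rwa [add_left_comm, add_comm]
  simpa [Real.volume_Icc_pi] using
    mul_volume_le_of_le_volume_insertNth i (by measurability) measurableSet_Icc fun y hy =>
      (half_le_volume_setOf_fract_add_mul_cos_mem_Icc hδ₀ hδ₁ hGi).trans
        (measure_mono (hslice y hy))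

/-- **Theorem.** For every `m ≥ 1` and `Δ > 0` there is an effective `δ ∈ (0, 1/2)` such that
for all non-negative `G₁,…,G_m` with `Σ G_j ≥ Δ` and every `s₀ ≥ 0`, the set of
`x ∈ [0,1]^m` for which the fractional part of `s₀ + Σ_j G_j cos(2π x_j)` lies in
`[δ, 1−δ]` has Lebesgue measure at least `1/2`. -/
theorem cosine_sum_fract_in_middle
    (m : ℕ) (hm : 1 ≤ m) (Δ : ℝ) (hΔ : 0 < Δ) :
    ∃ δ : ℝ, δ ∈ Set.Ioo (0:ℝ) (1/2) ∧
      ∀ G : Fin m → ℝ, (∀ j, 0 ≤ G j) → Δ ≤ ∑ j, G j →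
        ∀ s₀ : ℝ, 0 ≤ s₀ →
          (1/2 : ℝ) ≤ (volume {x : Fin m → ℝ |
              (∀ j, x j ∈ Set.Icc (0:ℝ) 1) ∧
              Int.fract (s₀ + ∑ j, G j * Real.cos (2 * π * x j)) ∈
                Set.Icc δ (1 - δ)}).toReal := by
  obtain ⟨n, rfl⟩ : ∃ n, m = n + 1 := ⟨m - 1, by omega⟩
  set δ := min (1 / 64) (Δ / (96 * (n + 1)))
  have hδ₀ : 0 < δ := lt_min (by norm_num) (by positivity)
  have hδ₁ : δ ≤ 1 / 64 := min_le_left _ _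
  refine ⟨δ, ⟨hδ₀, by linarith⟩, fun G _ hG s₀ _ => ?_⟩
  obtain ⟨i, hi⟩ := exists_div_card_le_of_le_sum hG
  have hGi : 96 * δ ≤ G i := calc
    96 * δ ≤ 96 * (Δ / (96 * (n + 1))) := by gcongr; exact min_le_right _ _
    _ = Δ / Fintype.card (Fin (n + 1)) := by rw [Fintype.card_fin, Nat.cast_add_one]; field_simp
    _ ≤ G i := hi
  have hfinite : volume {x : Fin (n + 1) → ℝ | (∀ j, x j ∈ Icc (0 : ℝ) 1) ∧
      Int.fract (s₀ + ∑ j, G j * cos (2 * π * x j)) ∈ Icc δ (1 - δ)} ≠ ⊤ :=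
    ne_top_of_le_ne_top (by simp [Real.volume_Icc_pi])
      (measure_mono (t := Icc 0 1) fun x hx => ⟨fun j => (hx.1 j).1, fun j => (hx.1 j).2⟩)
  simpa using ENNReal.toReal_mono hfinite
    (half_le_volume_setOf_fract_sum_mul_cos_mem_Icc G i s₀ hδ₀ hδ₁ hGi)
end

section
/- Let α be a Salem number of degree d = 2m+2 with m ≥ 1, so that the Galois conjugates of α are α^{−1} and m pairs e^{±2πiθ_j} (j = 1,…,m) on the unit circle, and let σ_j : ℚ(α) → ℂ be the field embedding with σ_j(α) = e^{2πiθ_j}. If ω ∈ ℚ(α) is irrational, then σ_j(ω) ≠ ω for some j ∈ {1,…,m}. -/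
/-!
If every embedding of `ℚ(α)` but the one sending `α` to `α⁻¹` fixes `ω`, then the traces of `ω`
and `ω²` read `(d - 1) ω + β` and `(d - 1) ω² + β²` with `β` the remaining conjugate of `ω`.
Eliminating `β` gives a rational quadratic `g` with `g(ω) = 0`, hence `g(β) = 0`, and
`g(β) = (d - 1)(d - 2)(β - ω)²`. For `d ≥ 3` this forces `β = ω`, so `ω = Tr(ω) / d` is rational.
-/

open Polynomial IntermediateField

noncomputable section

/-- A Salem number: a real algebraic integer `α > 1` all of whose conjugates other than `α`
itself have modulus at most `1`, with at least one conjugate of modulus exactly `1`. -/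
def IsSalem (α : ℝ) : Prop :=
  1 < α ∧ IsIntegral ℤ α ∧
  (∀ z : ℂ, ((minpoly ℚ α).map (algebraMap ℚ ℂ)).IsRoot z → z ≠ (α : ℂ) →
    ‖z‖ ≤ 1) ∧
  (∃ z : ℂ, ((minpoly ℚ α).map (algebraMap ℚ ℂ)).IsRoot z ∧ ‖z‖ = 1)

theorem exists_sum_aeval_aroots_minpoly_eq_algebraMap {K L E : Type*} [Field K] [Field L]
    [Algebra K L] [Field E] [Algebra K E] [IsAlgClosed E] {x : L} (hx : IsIntegral K x)
    (hsep : IsSeparable K x) (q : K[X]) :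
    ∃ r : K, (((minpoly K x).aroots E).map fun t ↦ aeval t q).sum = algebraMap K E r := by
  classical
  have : FiniteDimensional K K⟮x⟯ := adjoin.finiteDimensional hx
  have : Algebra.IsSeparable K K⟮x⟯ := (isSeparable_adjoin_simple_iff_isSeparable K L).mpr hsep
  let pb := adjoin.powerBasis hx
  have hminpoly : minpoly K pb.gen = minpoly K x := by
    rw [adjoin.powerBasis_gen hx, minpoly_gen]
  have hnodup : ((minpoly K x).aroots E).Nodup := nodup_roots ((separable_map _).mpr hsep)
  refine ⟨Algebra.trace K K⟮x⟯ (aeval pb.gen q), ?_⟩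
  rw [trace_eq_sum_embeddings]
  simp_rw [← aeval_algHom_apply]
  rw [Fintype.sum_equiv pb.liftEquiv' _ (fun y ↦ aeval (y : E) q) fun σ ↦ by
    rw [PowerBasis.liftEquiv'_apply_coe], Finset.sum_mem_multiset _ _ (fun y ↦ aeval y q)
    fun _ ↦ rfl, Finset.sum_eq_multiset_sum, Multiset.toFinset_val, hminpoly, hnodup.dedup]

theorem Multiset.sum_map_eq_add_nsmul_of_forall_ne {ι M : Type*} [AddCommMonoid M]
    [DecidableEq ι] {s : Multiset ι} (hs : s.Nodup) {a : ι} (ha : a ∈ s) (f : ι → M) (b : M)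
    (hf : ∀ t ∈ s, t ≠ a → f t = b) : (s.map f).sum = f a + (s.card - 1) • b := by
  have hconst : ∀ t ∈ s.erase a, f t = b := fun t ht ↦
    hf t (mem_of_mem_erase ht) (hs.mem_erase_iff.mp ht).1
  rw [← cons_erase ha, map_cons, sum_cons, map_congr rfl hconst, map_const', sum_replicate,
    card_cons, card_erase_of_mem ha, Nat.pred_eq_sub_one, Nat.add_sub_cancel]

theorem exists_aeval_eq_algebraMap_of_aeval_aroots_eq_of_mem {K E : Type*} [Field K]
    [CharZero K] [Field E] [Algebra K E] [IsAlgClosed E] {x γ : E} (hx : IsIntegral K x)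
    (hdeg : 3 ≤ (minpoly K x).natDegree) (p : K[X]) (hγ : γ ∈ (minpoly K x).aroots E)
    (hp : ∀ t ∈ (minpoly K x).aroots E, t ≠ γ → aeval t p = aeval x p) :
    ∃ r : K, aeval x p = algebraMap K E r := by
  classical
  have : CharZero E := charZero_of_injective_algebraMap (algebraMap K E).injective
  have hsep : IsSeparable K x := (minpoly.irreducible hx).separable
  have hnodup : ((minpoly K x).aroots E).Nodup := nodup_roots ((separable_map _).mpr hsep)
  have hcard : ((minpoly K x).aroots E).card = (minpoly K x).natDegree := by
    rw [aroots_def, IsAlgClosed.card_roots_eq_natDegree, natDegree_map]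
  set c := (minpoly K x).natDegree - 1
  have hc : 2 ≤ c := by omega
  set ω := aeval x p
  set β := aeval γ p
  have hsum (q : K[X]) : (((minpoly K x).aroots E).map fun t ↦ aeval t (q.comp p)).sum =
      aeval β q + c • aeval ω q := by
    rw [Multiset.sum_map_eq_add_nsmul_of_forall_ne hnodup hγ _ (aeval ω q)
      fun t ht hne ↦ by rw [aeval_comp, hp t ht hne], hcard, aeval_comp]
  obtain ⟨r₁, hr₁⟩ := exists_sum_aeval_aroots_minpoly_eq_algebraMap (E := E) hx hsep (X.comp p)
  obtain ⟨r₂, hr₂⟩ :=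
    exists_sum_aeval_aroots_minpoly_eq_algebraMap (E := E) hx hsep ((X ^ 2).comp p)
  rw [hsum] at hr₁ hr₂
  simp only [aeval_X, map_pow, nsmul_eq_mul] at hr₁ hr₂
  let g : K[X] := C (c : K) * X ^ 2 + (C r₁ - C (c : K) * X) ^ 2 - C r₂
  have hg (y : E) : aeval y g =
      c * y ^ 2 + (algebraMap K E r₁ - c * y) ^ 2 - algebraMap K E r₂ := by
    simp [g]
  have hgβ : aeval β g = 0 := by
    have hgω : aeval x (g.comp p) = 0 := by
      rw [aeval_comp, hg]
      linear_combination hr₂ - (algebraMap K E r₁ - c * ω + β) * hr₁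
    rw [← aeval_comp]
    exact aeval_eq_zero_of_dvd_aeval_eq_zero (minpoly.dvd K x hgω) (mem_aroots.mp hγ).2
  have hβω : β = ω := by
    have hcE : (c : E) * (c - 1) ≠ 0 := mul_ne_zero (Nat.cast_ne_zero.mpr (by omega))
      (sub_ne_zero.mpr (Nat.cast_ne_one.mpr (by omega)))
    have key : (c : E) * (c - 1) * (β - ω) ^ 2 = 0 := by
      rw [hg] at hgβ
      linear_combination hgβ - hr₂ + (β + c * ω - 2 * c * β + algebraMap K E r₁) * hr₁
    have hsq := (mul_eq_zero.mp key).resolve_left hcE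
    exact sub_eq_zero.mp (pow_eq_zero_iff two_ne_zero |>.mp hsq)
  refine ⟨r₁ / (c + 1), ?_⟩
  rw [map_div₀, ← hr₁, hβω]
  push_cast
  field_simp
  ring

theorem exists_aeval_eq_algebraMap_of_aeval_aroots_eq {K E : Type*} [Field K] [CharZero K]
    [Field E] [Algebra K E] [IsAlgClosed E] {x : E} (hx : IsIntegral K x)
    (hdeg : 3 ≤ (minpoly K x).natDegree) (p : K[X]) (γ : E)
    (hp : ∀ t ∈ (minpoly K x).aroots E, t ≠ γ → aeval t p = aeval x p) :
    ∃ r : K, aeval x p = algebraMap K E r := by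
  by_cases hγ : γ ∈ (minpoly K x).aroots E
  · exact exists_aeval_eq_algebraMap_of_aeval_aroots_eq_of_mem hx hdeg p hγ hp
  · have hxroot : x ∈ (minpoly K x).aroots E :=
      mem_aroots.mpr ⟨minpoly.ne_zero hx, minpoly.aeval K x⟩
    exact exists_aeval_eq_algebraMap_of_aeval_aroots_eq_of_mem hx hdeg p hxroot
      fun t ht _ ↦ hp t ht (ne_of_mem_of_not_mem ht hγ)

theorem salem_embedding_moves_irrational_general
    (m : ℕ) (hm : 1 ≤ m) (α : ℝ)
    (hdeg : (minpoly ℚ α).natDegree = 2 * m + 2)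
    (z : Fin m → ℂ)
    (hall : ∀ w : ℂ, ((minpoly ℚ α).map (algebraMap ℚ ℂ)).IsRoot w →
      w = (α : ℂ) ∨ w = ((α⁻¹ : ℝ) : ℂ) ∨ ∃ j, w = z j ∨ w = (starRingEnd ℂ) (z j))
    (p : Polynomial ℚ) (ω : ℝ) (hω : ω = Polynomial.aeval α p)
    (hirrat : ¬ ∃ r : ℚ, ω = (r : ℝ)) :
    ∃ j : Fin m, Polynomial.aeval (z j) p ≠ ((ω : ℝ) : ℂ) := by
  by_contra! hfix
  have hα : IsIntegral ℚ α := by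
    by_contra h
    simp [minpoly.eq_zero h] at hdeg
  have hminpoly : minpoly ℚ (α : ℂ) = minpoly ℚ α :=
    minpoly.algebraMap_eq (algebraMap ℝ ℂ).injective α
  have hωα : aeval (α : ℂ) p = ω := by rw [hω]; exact aeval_algebraMap_apply ℂ α p
  have hconj (y : ℂ) : aeval ((starRingEnd ℂ) y) p = (starRingEnd ℂ) (aeval y p) :=
    aeval_algHom_apply (Complex.conjAe.toAlgHom.restrictScalars ℚ) y p
  obtain ⟨r, hr⟩ := exists_aeval_eq_algebraMap_of_aeval_aroots_eq (x := (α : ℂ))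
    hα.algebraMap (by rw [hminpoly]; omega) p ((α⁻¹ : ℝ) : ℂ) fun t ht hne ↦ by
      rw [hminpoly, aroots_def, mem_roots'] at ht
      rcases hall t ht.2 with rfl | rfl | ⟨j, rfl | rfl⟩
      · rfl
      · exact absurd rfl hne
      · rw [hfix, hωα]
      · rw [hconj, hfix, hωα, Complex.conj_ofReal]
  exact hirrat ⟨r, Complex.ofReal_injective <| by
    rw [← hωα, hr, eq_ratCast, Complex.ofReal_ratCast]⟩

/-- **Lemma.** Let `α` be a Salem number of degree `d = 2m+2`, with conjugates `α⁻¹` and the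
pairs `z_j, conj z_j` (`|z_j| = 1`), and let `σ_j` be the embedding of `ℚ(α)` with
`σ_j(α) = z_j`, so that `σ_j(p(α)) = p(z_j)` for `p ∈ ℚ[x]`. If `ω = p(α) ∈ ℚ(α)` is
irrational, then `σ_j(ω) ≠ ω` for some `j ∈ {1,…,m}`. -/
theorem salem_embedding_moves_irrational
    (m : ℕ) (hm : 1 ≤ m) (α : ℝ) (hsalem : IsSalem α)
    (hdeg : (minpoly ℚ α).natDegree = 2 * m + 2)
    (z : Fin m → ℂ)
    (hroots : ∀ j, ((minpoly ℚ α).map (algebraMap ℚ ℂ)).IsRoot (z j))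
    (hmod : ∀ j, ‖z j‖ = 1)
    (him : ∀ j, 0 < (z j).im)
    (hinj : Function.Injective z)
    (hall : ∀ w : ℂ, ((minpoly ℚ α).map (algebraMap ℚ ℂ)).IsRoot w →
      w = (α : ℂ) ∨ w = ((α⁻¹ : ℝ) : ℂ) ∨ ∃ j, w = z j ∨ w = (starRingEnd ℂ) (z j))
    (p : Polynomial ℚ) (ω : ℝ) (hω : ω = Polynomial.aeval α p)
    (hirrat : ¬ ∃ r : ℚ, ω = (r : ℝ)) :
    ∃ j : Fin m, Polynomial.aeval (z j) p ≠ ((ω : ℝ) : ℂ) :=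
  salem_embedding_moves_irrational_general m hm α hdeg z hall p ω hω hirrat

end
end

section
/- Let A be a d×d complex matrix, θ > 0 a real number, u ∈ ℂ^d a vector with Au = θu, and H₂ ⊆ ℂ^d an A-invariant subspace with ℂ^d = ℂu ⊕ H₂. Let ‖·‖_{H₂} be a norm on H₂ and ρ ≥ 0 be such that ‖Av‖_{H₂} ≤ ρ·‖v‖_{H₂} for all v ∈ H₂, and equip ℂ^d with the adapted norm ‖c·u + v‖ = max(|c|, ‖v‖_{H₂}) for c ∈ ℂ, v ∈ H₂. Let ε > 0 satisfy ρ + ε < θ and let δ ∈ (0,1). If ΔA is a d×d complex matrix whose operator norm with respect to the adapted norm satisfies ‖ΔA‖ < min{ε, δ·(θ − ρ − ε)}, then for any x = c₁u + v with c₁ > 0 real, v ∈ H₂ and ‖v‖_{H₂} ≤ δ·c₁, writing (A + ΔA)x = c₂u + w with c₂ ∈ ℂ and w ∈ H₂, one has |c₂| > c₁·(θ − ε) and ‖w‖_{H₂} < |c₂|·δ. -/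
open Matrix Set

noncomputable section

/-! Split `ΔA x = c' • u + w'` along `ℂ u ⊕ H₂`. As `A u = θ u` and `A H₂ ⊆ H₂`, uniqueness of the
splitting gives `c₂ = c₁ θ + c'` and `w = A v + w'`; the cone condition makes the adapted norm of
`x` equal to `c₁`, so `‖c'‖, nH w' ≤ K c₁`. Hence `‖c₂‖ ≥ c₁ (θ - K) > c₁ (θ - ε)` and
`nH w ≤ ρ δ c₁ + K c₁ < δ c₁ (θ - ε) < δ ‖c₂‖`. -/

section Decomposition

variable {𝕜 E : Type*} [DivisionRing 𝕜] [AddCommGroup E] [Module 𝕜 E] {u : E} {H : Submodule 𝕜 E}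

theorem exists_smul_add_of_codisjoint_span (h : Codisjoint (𝕜 ∙ u) H) (x : E) :
    ∃ c : 𝕜, ∃ v ∈ H, x = c • u + v := by
  obtain ⟨_, hs, v, hv, rfl⟩ :=
    Submodule.mem_sup.mp (h.eq_top ▸ Submodule.mem_top : x ∈ (𝕜 ∙ u) ⊔ H)
  obtain ⟨c, rfl⟩ := Submodule.mem_span_singleton.mp hs
  exact ⟨c, v, hv, rfl⟩

theorem smul_add_injective_of_disjoint_span (hu : u ≠ 0) (h : Disjoint (𝕜 ∙ u) H)
    {c c' : 𝕜} {v v' : E} (hv : v ∈ H) (hv' : v' ∈ H) (heq : c • u + v = c' • u + v') :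
    c = c' ∧ v = v' := by
  have hdiff : (c - c') • u = v' - v := by
    rw [sub_smul, sub_eq_sub_iff_add_eq_add, heq, add_comm]
  have hzero : (c - c') • u = 0 :=
    (Submodule.disjoint_def.mp h) _ (Submodule.smul_mem _ _ (Submodule.mem_span_singleton_self u))
      (hdiff ▸ H.sub_mem hv' hv)
  have hc : c = c' := sub_eq_zero.mp ((smul_eq_zero.mp hzero).resolve_right hu)
  subst hc
  exact ⟨rfl, add_left_cancel heq⟩

end Decomposition

section AdaptedNorm

variable {𝕜 E : Type*} [NormedField 𝕜] [AddCommGroup E] [Module 𝕜 E]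

/-- `‖g‖ ≤ K` in the operator norm of the adapted norm `‖c • u + v‖ = max ‖c‖ (nH v)`,
`v ∈ H`, written in coordinates so that no norm structure on `E` is needed. -/
def AdaptedOpNormLE (u : E) (H : Submodule 𝕜 E) (nH : E → ℝ) (g : E →ₗ[𝕜] E) (K : ℝ) : Prop :=
  ∀ (c : 𝕜) (v : E), v ∈ H → ∀ (c' : 𝕜) (w : E), w ∈ H →
    g (c • u + v) = c' • u + w → max ‖c'‖ (nH w) ≤ K * max ‖c‖ (nH v)

variable {u : E} {H : Submodule 𝕜 E} {nH : E → ℝ} {g : E →ₗ[𝕜] E} {K : ℝ}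

-- For `u = 0` every scalar is a `u`-coordinate of `g 0 = 0`, while the bound forces it to vanish.
theorem AdaptedOpNormLE.ne_zero (hg : AdaptedOpNormLE u H nH g K) (h0 : nH 0 = 0) : u ≠ 0 := by
  rintro rfl
  have h := hg 0 0 H.zero_mem 1 0 H.zero_mem (by simp)
  norm_num [h0] at h

theorem AdaptedOpNormLE.exists_coords_add_apply (hg : AdaptedOpNormLE u H nH g K) (h0 : nH 0 = 0)
    (hcompl : IsCompl (𝕜 ∙ u) H) {f : E →ₗ[𝕜] E} {θ : 𝕜} (hu : f u = θ • u)
    (hf : ∀ v ∈ H, f v ∈ H) {c₁ c₂ : 𝕜} {v w : E} (hv : v ∈ H) (hw : w ∈ H)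
    (h : (f + g) (c₁ • u + v) = c₂ • u + w) :
    ∃ c' : 𝕜, ∃ w' ∈ H, c₂ = c₁ * θ + c' ∧ w = f v + w' ∧
      max ‖c'‖ (nH w') ≤ K * max ‖c₁‖ (nH v) := by
  obtain ⟨c', w', hw', hgx⟩ :=
    exists_smul_add_of_codisjoint_span hcompl.codisjoint (g (c₁ • u + v))
  have hsplit : (f + g) (c₁ • u + v) = (c₁ * θ + c') • u + (f v + w') := by
    rw [LinearMap.add_apply, hgx, map_add, map_smul, hu, smul_smul]
    module
  obtain ⟨hc₂, hw⟩ := smul_add_injective_of_disjoint_span (hg.ne_zero h0) hcompl.disjoint hw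
    (H.add_mem (hf v hv) hw') (h.symm.trans hsplit)
  exact ⟨c', w', hw', hc₂, hw, hg c₁ v hv c' w' hw' hgx⟩

end AdaptedNorm

theorem perturbed_cone_step_general
    (d : ℕ) (A ΔA : Matrix (Fin d) (Fin d) ℂ)
    (θ : ℝ)
    (u : Fin d → ℂ) (hu : A *ᵥ u = (θ : ℂ) • u)
    (H₂ : Submodule ℂ (Fin d → ℂ))
    (hAinv : ∀ v ∈ H₂, A *ᵥ v ∈ H₂)
    (hcompl : IsCompl (Submodule.span ℂ {u}) H₂)
    -- the norm `‖·‖_{H₂}` on the invariant complement: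
    (nH : (Fin d → ℂ) → ℝ)
    (hnHsmul : ∀ (a : ℂ), ∀ v ∈ H₂, nH (a • v) = ‖a‖ * nH v)
    (hnHadd : ∀ v ∈ H₂, ∀ w ∈ H₂, nH (v + w) ≤ nH v + nH w)
    (ρ : ℝ) (hρ : 0 ≤ ρ)
    (hcontr : ∀ v ∈ H₂, nH (A *ᵥ v) ≤ ρ * nH v)
    (ε δ : ℝ) (hδ : δ ∈ Set.Ioo (0:ℝ) 1)
    -- `K` bounds the adapted operator norm of `ΔA`, `K < min{ε, δ(θ − ρ − ε)}`:
    (K : ℝ) (hK : K < min ε (δ * (θ - ρ - ε)))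
    (hΔop : ∀ (c : ℂ) (v : Fin d → ℂ), v ∈ H₂ →
      ∀ (c' : ℂ) (w : Fin d → ℂ), w ∈ H₂ →
        ΔA *ᵥ (c • u + v) = c' • u + w →
        max (‖c'‖) (nH w) ≤ K * max (‖c‖) (nH v))
    (c₁ : ℝ) (hc₁ : 0 < c₁)
    (v : Fin d → ℂ) (hv : v ∈ H₂) (hvn : nH v ≤ δ * c₁)
    (c₂ : ℂ) (w : Fin d → ℂ) (hw : w ∈ H₂)
    (hdecomp : (A + ΔA) *ᵥ ((c₁ : ℂ) • u + v) = c₂ • u + w) :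
    c₁ * (θ - ε) < ‖c₂‖ ∧ nH w < ‖c₂‖ * δ := by
  obtain ⟨hδ0, hδ1⟩ := hδ
  have hKε : K < ε := hK.trans_le (min_le_left _ _)
  have hKδ : K < δ * (θ - ρ - ε) := hK.trans_le (min_le_right _ _)
  have h0 : nH 0 = 0 := by simpa using hnHsmul 0 0 H₂.zero_mem
  obtain ⟨c', w', hw', rfl, rfl, hbound⟩ :=
    AdaptedOpNormLE.exists_coords_add_apply (g := ΔA.mulVecLin) (f := A.mulVecLin)
      hΔop h0 hcompl hu hAinv hv hw (by rwa [← Matrix.mulVecLin_add])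
  have hx : max ‖(c₁ : ℂ)‖ (nH v) = c₁ := by
    rw [Complex.norm_real, Real.norm_of_nonneg hc₁.le,
      max_eq_left (hvn.trans (mul_le_of_le_one_left hc₁.le hδ1.le))]
  obtain ⟨hc', hw'_le⟩ := max_le_iff.mp (hx ▸ hbound)
  have hc₂ : c₁ * (θ - ε) < ‖(c₁ : ℂ) * θ + c'‖ :=
    calc c₁ * (θ - ε) < c₁ * θ - K * c₁ := by linarith [mul_lt_mul_of_pos_right hKε hc₁]
      _ ≤ ‖(c₁ : ℂ) * θ‖ - ‖c'‖ := by
        rw [← Complex.ofReal_mul, Complex.norm_real]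
        exact sub_le_sub (Real.le_norm_self _) hc'
      _ ≤ ‖(c₁ : ℂ) * θ + c'‖ := norm_sub_le_norm_add _ _
  refine ⟨hc₂, ?_⟩
  calc nH (A *ᵥ v + w') ≤ ρ * nH v + K * c₁ :=
        (hnHadd _ (hAinv v hv) _ hw').trans (add_le_add (hcontr v hv) hw'_le)
    _ ≤ ρ * (δ * c₁) + K * c₁ := by gcongr
    _ < δ * (c₁ * (θ - ε)) := by linarith [mul_lt_mul_of_pos_right hKδ hc₁]
    _ < ‖(c₁ : ℂ) * θ + c'‖ * δ := (mul_lt_mul_of_pos_left hc₂ hδ0).trans_eq (mul_comm _ _)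

/-- **Lemma (one-step perturbation).** Let `A` be a matrix with eigenvector `u`, `Au = θu`,
and an invariant complement `H₂` on which `A` contracts by factor `ρ` in a norm `nH`; equip
`ℂ^d` with the adapted norm `‖c u + v‖ = max(|c|, nH v)`. If `‖ΔA‖ < min{ε, δ(θ − ρ − ε)}`
in the adapted operator norm, then `(A + ΔA)` maps the cone `{c₁ u + v : nH v ≤ δ c₁}` into
itself, expanding the `u`-coefficient by a factor `> θ − ε`. -/
theorem perturbed_cone_step
    (d : ℕ) (A ΔA : Matrix (Fin d) (Fin d) ℂ)
    (θ : ℝ) (hθ : 0 < θ)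
    (u : Fin d → ℂ) (hu : A *ᵥ u = (θ : ℂ) • u)
    (H₂ : Submodule ℂ (Fin d → ℂ))
    (hAinv : ∀ v ∈ H₂, A *ᵥ v ∈ H₂)
    (hcompl : IsCompl (Submodule.span ℂ {u}) H₂)
    -- the norm `‖·‖_{H₂}` on the invariant complement:
    (nH : (Fin d → ℂ) → ℝ)
    (hnH0 : ∀ v ∈ H₂, 0 ≤ nH v)
    (hnHeq : ∀ v ∈ H₂, (nH v = 0 ↔ v = 0))
    (hnHsmul : ∀ (a : ℂ), ∀ v ∈ H₂, nH (a • v) = ‖a‖ * nH v)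
    (hnHadd : ∀ v ∈ H₂, ∀ w ∈ H₂, nH (v + w) ≤ nH v + nH w)
    (ρ : ℝ) (hρ : 0 ≤ ρ)
    (hcontr : ∀ v ∈ H₂, nH (A *ᵥ v) ≤ ρ * nH v)
    (ε δ : ℝ) (hε : 0 < ε) (hρεθ : ρ + ε < θ) (hδ : δ ∈ Set.Ioo (0:ℝ) 1)
    -- `K` bounds the adapted operator norm of `ΔA`, `K < min{ε, δ(θ − ρ − ε)}`:
    (K : ℝ) (hK0 : 0 ≤ K) (hK : K < min ε (δ * (θ - ρ - ε)))
    (hΔop : ∀ (c : ℂ) (v : Fin d → ℂ), v ∈ H₂ →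
      ∀ (c' : ℂ) (w : Fin d → ℂ), w ∈ H₂ →
        ΔA *ᵥ (c • u + v) = c' • u + w →
        max (‖c'‖) (nH w) ≤ K * max (‖c‖) (nH v))
    (c₁ : ℝ) (hc₁ : 0 < c₁)
    (v : Fin d → ℂ) (hv : v ∈ H₂) (hvn : nH v ≤ δ * c₁)
    (c₂ : ℂ) (w : Fin d → ℂ) (hw : w ∈ H₂)
    (hdecomp : (A + ΔA) *ᵥ ((c₁ : ℂ) • u + v) = c₂ • u + w) :
    c₁ * (θ - ε) < ‖c₂‖ ∧ nH w < ‖c₂‖ * δ :=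
  perturbed_cone_step_general d A ΔA θ u hu H₂ hAinv hcompl nH hnHsmul hnHadd ρ hρ hcontr ε δ hδ K
    hK hΔop c₁ hc₁ v hv hvn c₂ w hw hdecomp

end
end
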